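/- arXiv:1812.06958 — 10 statements merged into one kernel-verified Lean document; each statement's English description precedes it below -/
import Mathlib

section
/- Let R be an infinite commutative noetherian integral domain and M a free R-module of countably infinite rank with free generators (g_n)_{n<ω}. Let (a_α)_{α<σ} be a family of nonzero elements of M indexed by an ordinal σ such that the submodules M_α generated by {a_β : β < α} form a strictly increasing chain (i.e. a_α ∉ M_α for each α < σ), and let (z_α)_{α<σ} be arbitrary elements of R. Then there exists an R-module homomorphism ψ : M → R such that ψ(a_α) ≠ z_α for all α < σ. -/
/-! Write `a α` in the basis and let `d α` be the largest index of its support. As the spans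
`M_α` strictly increase, only finitely many `a α` lie in the noetherian submodule spanned by
`g_0, …, g_n`; hence only finitely many `α` have `d α = n`. Define `ψ (g_n)` by recursion on `n`:
for `d α = n`, `ψ (a α)` is an affine function of `ψ (g_n)` with nonzero slope, so each such `α`
forbids a single value, and since `R` is infinite a permitted value remains. -/

open Submodule

theorem exists_seq_forall_of_forall_exists {α : Type*} {Q : ∀ n, (Fin n → α) → α → Prop}
    (h : ∀ n p, ∃ x, Q n p x) : ∃ c : ℕ → α, ∀ n, Q n (fun i => c i) (c n) := by
  choose f hf using h
  refine ⟨Nat.strongRec fun n prev => f n fun i => prev i i.2, fun n => ?_⟩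
  beta_reduce
  rw [Nat.strongRec_eq]
  exact hf _ _

theorem Submodule.finite_setOf_mem_of_notMem_span_image_Iio {R M σ : Type*} [Semiring R]
    [AddCommMonoid M] [Module R M] [LinearOrder σ] [WellFoundedLT σ] {a : σ → M}
    (ha : ∀ α, a α ∉ span R (a '' Set.Iio α)) (N : Submodule R M) [IsNoetherian R N] :
    {α | a α ∈ N}.Finite := by
  have hmono : StrictMono fun α : {α | a α ∈ N} => (span R (a '' Set.Iio α)).comap N.subtype := by
    intro α β hαβ
    refine SetLike.lt_iff_le_and_exists.2 ⟨comap_mono (span_mono (Set.image_mono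
      (Set.Iio_subset_Iio hαβ.le))), ⟨a α, α.2⟩, subset_span ⟨α, hαβ, rfl⟩, ha α⟩
  have := hmono.wellFoundedGT
  have := Finite.of_wellFoundedLT_wellFoundedGT {α | a α ∈ N}
  exact Set.toFinite _

namespace Finsupp

theorem linearCombination_eq_sum_fin_add_of_support_subset_Iic {R : Type*} [CommSemiring R]
    {f : ℕ →₀ R} {n : ℕ} (hf : ↑f.support ⊆ Set.Iic n) (c : ℕ → R) :
    linearCombination R c f = ∑ i : Fin n, f i * c i + f n * c n := by
  rw [linearCombination_apply, sum_of_support_subset f (s := Finset.range (n + 1))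
    (fun i hi => Finset.mem_range_succ_iff.2 (hf hi)) (fun i a => a • c i)
    (fun _ _ => zero_smul R _),
    Finset.sum_range_succ, Fin.sum_univ_eq_sum_range (fun i => f i * c i)]
  simp only [smul_eq_mul]

theorem exists_linearCombination_ne {R σ : Type*} [CommRing R] [IsDomain R] [Infinite R]
    (v : σ → ℕ →₀ R) (hv : ∀ α, v α ≠ 0)
    (hfin : ∀ n, {α | ((v α).support : Set ℕ) ⊆ Set.Iic n}.Finite) (z : σ → R) :
    ∃ c : ℕ → R, ∀ α, linearCombination R c (v α) ≠ z α := by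
  let d α := (v α).support.max' (support_nonempty_iff.2 (hv α))
  have hd α : ((v α).support : Set ℕ) ⊆ Set.Iic (d α) := fun i hi => Finset.le_max' _ i hi
  have hvd α : v α (d α) ≠ 0 := mem_support_iff.1 (Finset.max'_mem _ _)
  have hstep n (p : Fin n → R) :
      ∃ x, ∀ α, d α = n → ∑ i : Fin n, v α i * p i + v α n * x ≠ z α := by
    have hbad : (⋃ α ∈ {α | d α = n}, {x | ∑ i : Fin n, v α i * p i + v α n * x = z α}).Finite :=
      ((hfin n).subset fun α (hα : d α = n) => hα ▸ hd α).biUnion fun α (hα : d α = n) =>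
        Set.Subsingleton.finite fun x hx y hy =>
          mul_left_cancel₀ (hα ▸ hvd α) (add_left_cancel (hx.trans hy.symm))
    obtain ⟨x, hx⟩ := hbad.infinite_compl.nonempty
    exact ⟨x, fun α hα hαx => hx (Set.mem_biUnion hα hαx)⟩
  obtain ⟨c, hc⟩ := exists_seq_forall_of_forall_exists hstep
  refine ⟨c, fun α => ?_⟩
  rw [linearCombination_eq_sum_fin_add_of_support_subset_Iic (hd α)]
  exact hc (d α) α rfl

end Finsupp

/-- Lemma 2.3 of the paper, countable-rank case: over an infinite commutative
noetherian domain `R`, for a free module `M` of countably infinite rank, a family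
`a` indexed by a well-order with `a α ∉ ⟨a β : β < α⟩`, and arbitrary `z α ∈ R`,
there is `ψ : M →ₗ R` with `ψ (a α) ≠ z α` for all `α`. -/
theorem stmt0 {R : Type*} [CommRing R] [IsDomain R] [IsNoetherianRing R] [Infinite R]
    {M : Type*} [AddCommGroup M] [Module R M] (b : Module.Basis ℕ R M)
    {σ : Type*} [LinearOrder σ] [WellFoundedLT σ]
    (a : σ → M) (ha : ∀ α, a α ∉ Submodule.span R (a '' Set.Iio α))
    (z : σ → R) :
    ∃ ψ : M →ₗ[R] R, ∀ α, ψ (a α) ≠ z α := by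
  have hv : ∀ α, b.repr (a α) ≠ 0 := fun α h =>
    ha α (b.repr.map_eq_zero_iff.1 h ▸ zero_mem _)
  have hfin : ∀ n, {α | ((b.repr (a α)).support : Set ℕ) ⊆ Set.Iic n}.Finite := fun n => by
    have : IsNoetherian R (span R (b '' Set.Iic n)) :=
      isNoetherian_of_fg_of_noetherian _ (fg_span ((Set.finite_Iic n).image b))
    simpa only [b.mem_span_image] using
      finite_setOf_mem_of_notMem_span_image_Iio ha (span R (b '' Set.Iic n))
  obtain ⟨c, hc⟩ := Finsupp.exists_linearCombination_ne _ hv hfin z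
  exact ⟨(Finsupp.linearCombination R c).comp b.repr.toLinearMap, hc⟩
end

section
/- Let λ be a regular cardinal such that every λ-complete filter on any set extends to an ω₁-complete ultrafilter (λ is L_{ω₁ω}-compact), and let Z be a countable first-order structure. If S is a set of first-order formulas over Z with free variables from a set X such that every subset T ⊆ S with |T| < λ is simultaneously realized by some assignment X → Z, then S itself is simultaneously realized by some assignment X → Z. -/
/-!
The cones `{T | φ ∈ T}`, `φ ∈ S`, generate an `l`-complete proper filter on `P_l(S)`, which
extends to a countably complete ultrafilter `U`. Pick a realizer `g T` of each small `T`. As `Z` is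
countable, countable completeness makes each coordinate `g T x` constant, say `f x`, for `U`-almost
all `T`. A given `φ ∈ S` lies in `U`-almost every `T`, and `g T` agrees with `f` on the finitely
many free variables of `φ` for `U`-almost every `T`; any such `T` shows that `f` realizes `φ`.
-/

universe u

open FirstOrder Language Cardinal Filter Set

theorem FirstOrder.Language.Formula.realize_congr {L : Language} {M α : Type*} [L.Structure M]
    [DecidableEq α] (φ : L.Formula α) {v w : α → M} (h : ∀ a ∈ φ.freeVarFinset, v a = w a) :
    φ.Realize v ↔ φ.Realize w :=
  (BoundedFormula.realize_restrictFreeVar (f := Subtype.val) v fun _ => rfl).symm.trans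
    (BoundedFormula.realize_restrictFreeVar w fun a => h a a.2)

theorem Ultrafilter.exists_eventually_eq_of_countable {α β : Type*} (U : Ultrafilter α)
    [CountableInterFilter (U : Filter α)] [Countable β] (g : α → β) :
    ∃ b, ∀ᶠ a in (U : Filter α), g a = b := by
  by_contra! h
  obtain ⟨a, ha⟩ := (eventually_countable_forall.2 h).exists
  exact ha _ rfl

section FineFilter

variable {α : Type u} {l : Cardinal.{u}}

/-- The set `P_l(S)` of set theory. -/
abbrev SmallSubset (S : Set α) (l : Cardinal.{u}) : Type u := {T : Set α // T ⊆ S ∧ #T < l}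

def fineFilter (hl : l.IsRegular) (S : Set α) : Filter (SmallSubset S l) :=
  cardinalGenerate (range fun a : S => {T : SmallSubset S l | a.1 ∈ T.1}) (hl.nat_lt 2)

variable (hl : l.IsRegular) {S : Set α}

theorem fineFilter_cardinalInterFilter : CardinalInterFilter (fineFilter hl S) l :=
  cardinalInter_ofCardinalGenerate _ _

theorem eventually_mem_fineFilter {a : α} (ha : a ∈ S) : ∀ᶠ T in fineFilter hl S, a ∈ T.1 :=
  CardinalGenerateSets.basic ⟨⟨a, ha⟩, rfl⟩

theorem fineFilter_neBot : (fineFilter hl S).NeBot := by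
  refine forall_mem_nonempty_iff_neBot.1 fun s hs => ?_
  obtain ⟨C, hCgen, hCcard, hCs⟩ := (mem_cardinalGenerate_iff (hreg := hl)).1 hs
  choose a ha using hCgen
  refine ⟨⟨range fun c : C => (a c.2).1, ?_, mk_range_le.trans_lt hCcard⟩, hCs fun c hc => ?_⟩
  · rintro _ ⟨c, rfl⟩
    exact (a c.2).2
  · rw [← ha hc]
    exact ⟨⟨c, hc⟩, rfl⟩

end FineFilter

/-- Proposition 2.1: if `l` is a regular `L_{ω₁ω}`-compact cardinal (every
`l`-complete proper filter extends to a countably complete ultrafilter) and `Z` is a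
countable first-order structure, then a set `S` of formulas in variables from `X` is
realized in `Z` provided every subset of `S` of cardinality `< l` is realized in `Z`. -/
theorem stmt3 {l : Cardinal.{u}} (hreg : l.IsRegular)
    (hcompact : ∀ (I : Type u) (F : Filter I), F.NeBot →
      (∀ s : Set (Set I), Cardinal.mk s < l → (∀ t ∈ s, t ∈ F) → ⋂₀ s ∈ F) →
      ∃ U : Ultrafilter I, (∀ t ∈ F, t ∈ U) ∧
        ∀ s : Set (Set I), s.Countable → (∀ t ∈ s, t ∈ U) → ⋂₀ s ∈ U)
    {L : FirstOrder.Language.{u, u}} {Z : Type u} [L.Structure Z] [Countable Z]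
    {X : Type u} (S : Set (L.Formula X))
    (hsmall : ∀ T ⊆ S, Cardinal.mk T < l → ∃ f : X → Z, ∀ φ ∈ T, φ.Realize f) :
    ∃ f : X → Z, ∀ φ ∈ S, φ.Realize f := by
  classical
  obtain ⟨U, hFU, hUcountable⟩ := hcompact _ (fineFilter hreg S) (fineFilter_neBot hreg)
    (fineFilter_cardinalInterFilter hreg).cardinal_sInter_mem
  have : CountableInterFilter (U : Filter (SmallSubset S l)) := ⟨hUcountable⟩
  choose g hg using fun T : SmallSubset S l => hsmall T.1 T.2.1 T.2.2
  choose f hf using fun x => U.exists_eventually_eq_of_countable (g · x)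
  refine ⟨f, fun φ hφ => ?_⟩
  have hmem : ∀ᶠ T in (U : Filter (SmallSubset S l)), φ ∈ T.1 :=
    hFU _ (eventually_mem_fineFilter hreg hφ)
  have hagree : ∀ᶠ T in (U : Filter (SmallSubset S l)), ∀ x ∈ φ.freeVarFinset, g T x = f x :=
    (eventually_all_finset _).2 fun x _ => hf x
  obtain ⟨T, hφT, hT⟩ := (hmem.and hagree).exists
  exact (φ.realize_congr hT).1 (hg T φ hφT)
end

section
/- Let λ be a regular L_{ω₁ω}-compact cardinal and let I be a set of homogeneous ℤ-linear equations in variables from a set X (each equation is a finite ℤ-linear combination of variables set equal to 0). If every nonempty subset T ⊆ I with |T| < λ admits a solution f : X → ℤ with f(x) ≠ 0 for all x ∈ X, then I admits a solution f : X → ℤ with f(x) ≠ 0 for all x ∈ X. -/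
universe u

/-- Corollary 2.2: if `l` is a regular `L_{ω₁ω}`-compact cardinal, then a system of
homogeneous `ℤ`-linear equations (indexed by `I`, in variables `X`) is nontrivially
solvable in `ℤ` (all variables get nonzero values) provided every nonempty subsystem
of cardinality `< l` is nontrivially solvable in `ℤ`. -/
theorem stmt4 {l : Cardinal.{u}} (hreg : l.IsRegular)
    (hcompact : ∀ (I : Type u) (F : Filter I), F.NeBot →
      (∀ s : Set (Set I), Cardinal.mk s < l → (∀ t ∈ s, t ∈ F) → ⋂₀ s ∈ F) →
      ∃ U : Ultrafilter I, (∀ t ∈ F, t ∈ U) ∧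
        ∀ s : Set (Set I), s.Countable → (∀ t ∈ s, t ∈ U) → ⋂₀ s ∈ U)
    {X : Type u} {I : Type u} (k : I → (X →₀ ℤ))
    (hsmall : ∀ T : Set I, T.Nonempty → Cardinal.mk T < l →
      ∃ f : X → ℤ, (∀ x, f x ≠ 0) ∧ ∀ i ∈ T, ((k i).sum fun x a => a * f x) = 0) :
    ∃ f : X → ℤ, (∀ x, f x ≠ 0) ∧ ∀ i, ((k i).sum fun x a => a * f x) = 0 := by
  rcases isEmpty_or_nonempty I with hI | hI
  · exact ⟨fun _ => 1, fun _ => one_ne_zero, fun i => (hI.elim i)⟩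
  obtain ⟨i₀⟩ := hI
  have hω : Cardinal.aleph0 ≤ l := hreg.aleph0_le
  have h0 : (0 : Cardinal.{u}) < l := hreg.pos
  have h1 : (1 : Cardinal.{u}) < l := Cardinal.one_lt_aleph0.trans_le hω
  set J := {T : Set I // T.Nonempty ∧ Cardinal.mk T < l} with hJdef
  choose f hf1 hf2 using fun T : J => hsmall T.1 T.2.1 T.2.2
  -- for any small B, there is a member of J containing it
  have elem : ∀ B : Set I, Cardinal.mk B < l → ∃ T : J, B ⊆ (T : Set I) := by
    intro B hB
    refine ⟨⟨insert i₀ B, ⟨i₀, Set.mem_insert _ _⟩, ?_⟩, Set.subset_insert _ _⟩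
    exact lt_of_le_of_lt Cardinal.mk_insert_le (Cardinal.add_lt_of_lt hω hB h1)
  -- the filter of "eventually large" subsystems
  let F : Filter J :=
    { sets := {S | ∃ B : Set I, Cardinal.mk B < l ∧ {T : J | B ⊆ (T : Set I)} ⊆ S}
      univ_sets := ⟨∅, by simpa using h0, fun _ _ => trivial⟩
      sets_of_superset := by
        rintro S S' ⟨B, hB, hBs⟩ hsub
        exact ⟨B, hB, hBs.trans hsub⟩
      inter_sets := by
        rintro S S' ⟨B₁, hB₁, hs₁⟩ ⟨B₂, hB₂, hs₂⟩
        refine ⟨B₁ ∪ B₂, lt_of_le_of_lt (Cardinal.mk_union_le _ _)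
          (Cardinal.add_lt_of_lt hω hB₁ hB₂), fun T hT => ?_⟩
        exact ⟨hs₁ (Set.Subset.trans Set.subset_union_left hT),
          hs₂ (Set.Subset.trans Set.subset_union_right hT)⟩ }
  have memF : ∀ S : Set J, S ∈ F ↔
      ∃ B : Set I, Cardinal.mk B < l ∧ {T : J | B ⊆ (T : Set I)} ⊆ S := fun _ => Iff.rfl
  have hne : F.NeBot := by
    refine Filter.neBot_iff.mpr fun hbot => ?_
    have : (∅ : Set J) ∈ F := by rw [hbot]; exact Filter.mem_bot
    obtain ⟨B, hB, hBs⟩ := (memF _).mp this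
    obtain ⟨T, hT⟩ := elem B hB
    exact (hBs hT).elim
  have hcomp : ∀ s : Set (Set J), Cardinal.mk s < l → (∀ t ∈ s, t ∈ F) → ⋂₀ s ∈ F := by
    intro s hs hmem
    choose B hB hBs using fun t : s => (memF _).mp (hmem t t.2)
    refine (memF _).mpr ⟨⋃ t : s, B t, ?_, ?_⟩
    · refine lt_of_le_of_lt (Cardinal.mk_iUnion_le _) (Cardinal.mul_lt_of_lt hω hs ?_)
      exact Cardinal.iSup_lt_of_isRegular hreg hs hB
    · intro T hT t ht
      exact hBs ⟨t, ht⟩ (Set.Subset.trans (Set.subset_iUnion B ⟨t, ht⟩) hT)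
  obtain ⟨U, hUF, hUcc⟩ := hcompact J F hne hcomp
  -- ultralimits of ℤ-valued functions exist
  have lim : ∀ g : J → ℤ, ∃ n : ℤ, {T | g T = n} ∈ U := by
    intro g
    by_contra h
    push_neg at h
    have hc : ∀ n : ℤ, {T | g T = n}ᶜ ∈ U := fun n =>
      (Ultrafilter.compl_mem_iff_notMem).mpr (h n)
    have hcnt : (Set.range fun n : ℤ => {T | g T = n}ᶜ).Countable := Set.countable_range _
    have hint := hUcc _ hcnt (by rintro t ⟨n, rfl⟩; exact hc n)
    have : ⋂₀ (Set.range fun n : ℤ => {T | g T = n}ᶜ) = ∅ := by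
      ext T
      simp only [Set.sInter_range, Set.mem_iInter, Set.mem_compl_iff, Set.mem_setOf_eq,
        Set.mem_empty_iff_false, iff_false, not_forall, not_not]
      exact ⟨g T, rfl⟩
    rw [this] at hint
    exact Filter.empty_notMem (U : Filter J) hint
  choose g hg using fun x => lim fun T => f T x
  refine ⟨g, ?_, ?_⟩
  · intro x hx
    have h0' : {T : J | f T x = g x} = ∅ := by
      ext T
      simp only [Set.mem_setOf_eq, Set.mem_empty_iff_false, iff_false]
      rw [hx]
      exact hf1 T x
    have := hg x
    rw [h0'] at this
    exact Filter.empty_notMem (U : Filter J) this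
  · intro i
    have hAi : {T : J | i ∈ (T : Set I)} ∈ U := by
      refine hUF _ ((memF _).mpr ⟨{i}, ?_, fun T hT => hT rfl⟩)
      simpa using h1
    have hbig : ({T : J | i ∈ (T : Set I)} ∩
        ⋂ x ∈ (k i).support, {T : J | f T x = g x}) ∈ U := by
      refine Filter.inter_mem hAi ?_
      exact (Filter.biInter_mem (k i).support.finite_toSet).mpr fun x _ => hg x
    obtain ⟨T, hT1, hT2⟩ := Filter.nonempty_of_mem hbig
    have heq : ((k i).sum fun x a => a * g x) = ((k i).sum fun x a => a * f T x) := by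
      refine Finset.sum_congr rfl fun x hx => ?_
      have hfx : f T x = g x := Set.mem_iInter₂.mp hT2 x hx
      simp [hfx]
    rw [heq]
    exact hf2 T i hT1
end

section
/- Let I be a set, F a κ-complete filter on I, and A = ℤ^I / F the quotient of the product ℤ^I by the subgroup of elements whose zero-set belongs to F. Then every subgroup H of A of cardinality strictly less than κ embeds into ℤ^I. -/
universe u

/-- The subgroup of `ℤ^I` of functions whose zero-set belongs to the filter `F`. -/
def zeroSetSubgroup {I : Type u} (F : Filter I) : AddSubgroup (I → ℤ) where
  carrier := {f | {i | f i = 0} ∈ F}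
  zero_mem' := by simp
  add_mem' := by
    intro f g hf hg
    filter_upwards [hf, hg] with i h1 h2
    simp only [Pi.add_apply, Set.mem_setOf_eq] at *
    omega
  neg_mem' := by
    intro f hf
    filter_upwards [hf] with i h
    simp only [Pi.neg_apply, Set.mem_setOf_eq] at *
    omega

/-!
Choose representatives `r a ∈ ℤ^I` of the elements `a ∈ H`. Each set where
`r (a + b) = r a + r b` lies in `F`; since `#H < κ`, intersecting first over `b` and then over
`a` keeps the intersection `T` of all of them in `F`. Cutting every representative down to `T`
gives an additive lift of `H ↪ ℤ^I / F` to `ℤ^I`, which is injective because its composite with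
the quotient map is.
-/

open Filter Cardinal

theorem Filter.eventually_forall_forall_of_mk_lt {α ι : Type u} {l : Filter α} {κ : Cardinal.{u}}
    [CardinalInterFilter l κ] {p : α → ι → ι → Prop} (hι : #ι < κ)
    (h : ∀ a b, ∀ᶠ x in l, p x a b) : ∀ᶠ x in l, ∀ a b, p x a b :=
  (eventually_cardinal_forall hι).2 fun a => (eventually_cardinal_forall hι).2 (h a)

theorem Filter.exists_addMonoidHom_eventuallyEq {G M ι : Type*} [AddZeroClass G] [AddGroup M]
    {l : Filter ι} (r : G → ι → M) (h : ∀ᶠ i in l, ∀ a b, r (a + b) i = r a i + r b i) :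
    ∃ φ : G →+ (ι → M), ∀ a, φ a =ᶠ[l] r a := by
  set T : Set ι := {i | ∀ a b, r (a + b) i = r a i + r b i}
  refine ⟨AddMonoidHom.mk' (fun a => T.indicator (r a)) fun a b => ?_, fun a => ?_⟩
  · rw [← Set.indicator_add']
    exact Set.indicator_congr fun i hi => hi a b
  · filter_upwards [h] with i hi
    exact Set.indicator_of_mem (s := T) hi _

theorem mem_zeroSetSubgroup_iff {I : Type u} {F : Filter I} {f : I → ℤ} :
    f ∈ zeroSetSubgroup F ↔ f =ᶠ[F] 0 :=
  Iff.rfl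

theorem mk_eq_mk_zeroSetSubgroup_iff {I : Type u} {F : Filter I} {f g : I → ℤ} :
    (f : (I → ℤ) ⧸ zeroSetSubgroup F) = g ↔ f =ᶠ[F] g := by
  rw [QuotientAddGroup.eq_iff_sub_mem, mem_zeroSetSubgroup_iff, ← eventuallyEq_iff_sub]

theorem exists_lift_zeroSetSubgroup_of_mk_lt {I G : Type u} [AddGroup G] {F : Filter I}
    {κ : Cardinal.{u}} [CardinalInterFilter F κ] (hG : #G < κ)
    (ψ : G →+ (I → ℤ) ⧸ zeroSetSubgroup F) :
    ∃ φ : G →+ (I → ℤ), (QuotientAddGroup.mk' (zeroSetSubgroup F)).comp φ = ψ := by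
  set r : G → I → ℤ := fun a => (ψ a).out
  have hr : ∀ a, (r a : (I → ℤ) ⧸ zeroSetSubgroup F) = ψ a := fun a => (ψ a).out_eq'
  have hadd : ∀ a b, r (a + b) =ᶠ[F] r a + r b := fun a b =>
    mk_eq_mk_zeroSetSubgroup_iff.1 (by rw [QuotientAddGroup.mk_add, hr, hr, hr, map_add])
  obtain ⟨φ, hφ⟩ := exists_addMonoidHom_eventuallyEq r (eventually_forall_forall_of_mk_lt hG hadd)
  refine ⟨φ, AddMonoidHom.ext fun a => ?_⟩
  rw [AddMonoidHom.comp_apply, QuotientAddGroup.mk'_apply, ← hr,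
    mk_eq_mk_zeroSetSubgroup_iff]
  exact hφ a

theorem stmt10_general {I : Type u} {κ : Cardinal.{u}}
    (F : Filter I)
    (hcomp : ∀ s : Set (Set I), Cardinal.mk s < κ → (∀ t ∈ s, t ∈ F) → ⋂₀ s ∈ F)
    (H : AddSubgroup ((I → ℤ) ⧸ zeroSetSubgroup F))
    (hH : Cardinal.mk H < κ) :
    ∃ φ : H →+ (I → ℤ), Function.Injective φ := by
  have : CardinalInterFilter F κ := ⟨hcomp⟩
  obtain ⟨φ, hφ⟩ := exists_lift_zeroSetSubgroup_of_mk_lt hH H.subtype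
  refine ⟨φ, Function.Injective.of_comp (f := QuotientAddGroup.mk' (zeroSetSubgroup F)) ?_⟩
  rw [← AddMonoidHom.coe_comp, hφ]
  exact H.subtype_injective

/-- If `F` is a `κ`-complete filter on `I` (`κ` uncountable), then every subgroup of
`A = ℤ^I / F` of cardinality `< κ` embeds into `ℤ^I`. -/
theorem stmt10 {I : Type u} {κ : Cardinal.{u}} (hκ : Cardinal.aleph0 < κ)
    (F : Filter I)
    (hcomp : ∀ s : Set (Set I), Cardinal.mk s < κ → (∀ t ∈ s, t ∈ F) → ⋂₀ s ∈ F)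
    (H : AddSubgroup ((I → ℤ) ⧸ zeroSetSubgroup F))
    (hH : Cardinal.mk H < κ) :
    ∃ φ : H →+ (I → ℤ), Function.Injective φ :=
  stmt10_general F hcomp H hH
end

section
/- Let I be a set and F a filter on I that cannot be extended to an ω₁-complete (countably complete) ultrafilter. Then the abelian group A = ℤ^I / F has trivial dual: Hom(A, ℤ) = 0. -/
/-!
Let `ψ : ℤ^I → ℤ` be a nonzero homomorphism killing the `F`-null functions, and call `S ⊆ I`
null when `ψ` kills every function supported in `S`. Two facts about homomorphisms
`Φ : ℤ^ℕ → ℤ` (Specker) control these null sets: if `Φ` kills every unit vector then `Φ = 0`,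
and `Φ` kills at least one unit vector. Composing `ψ` with `a ↦ (i ↦ a (idx i) * f i)` for a
partition `idx : I → ℕ` turns them into: null sets form a σ-ideal, and there is no sequence of
pairwise disjoint non-null sets. The second fact yields a non-null set `A` that cannot be split
into two non-null halves, and then `{S | A \ S is null}` is a countably complete ultrafilter
containing `F`.
-/

universe u

open Finset Function Filter Set

section SpeckerLemmas

theorem dvd_map_of_forall_dvd {ι : Type*} (Φ : (ι → ℤ) →+ ℤ) {M : ℤ} {a : ι → ℤ}
    (h : ∀ i, M ∣ a i) : M ∣ Φ a := by
  choose b hb using h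
  have : a = M • b := funext hb
  rw [this, map_zsmul, smul_eq_mul]
  exact dvd_mul_right M _

theorem map_single_eq_mul (Φ : (ℕ → ℤ) →+ ℤ) (n : ℕ) (c : ℤ) :
    Φ (Pi.single n c) = c * Φ (Pi.single n 1) := by
  rw [← smul_eq_mul, ← map_zsmul, ← Pi.single_smul', smul_eq_mul, mul_one]

theorem dvd_map_sub_sum (Φ : (ℕ → ℤ) →+ ℤ) {M : ℤ} {a : ℕ → ℤ} (K : ℕ)
    (h : ∀ n, K ≤ n → M ∣ a n) :
    M ∣ Φ a - ∑ n ∈ range K, a n * Φ (Pi.single n 1) := by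
  simp only [← map_single_eq_mul, ← map_sum, ← map_sub]
  refine dvd_map_of_forall_dvd Φ fun n => ?_
  rw [Pi.sub_apply, Finset.sum_apply, Finset.sum_pi_single]
  split_ifs with hn
  · simp
  · simpa using h n (not_lt.1 (mem_range.not.1 hn))

theorem Int.eq_zero_of_forall_pow_dvd {p z : ℤ} (hp : 2 ≤ p) (h : ∀ K : ℕ, p ^ K ∣ z) :
    z = 0 := by
  by_contra hz
  have hfin : FiniteMultiplicity p z := Int.finiteMultiplicity_iff.2 ⟨by omega, hz⟩
  obtain ⟨K, hK⟩ := hfin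
  exact hK (h (K + 1))

theorem map_eq_zero_of_forall_pow_dvd (Φ : (ℕ → ℤ) →+ ℤ) (h0 : ∀ n, Φ (Pi.single n 1) = 0)
    {p : ℤ} (hp : 2 ≤ p) {a : ℕ → ℤ} (ha : ∀ n, p ^ n ∣ a n) : Φ a = 0 := by
  refine Int.eq_zero_of_forall_pow_dvd hp fun K => ?_
  simpa [h0] using dvd_map_sub_sum Φ K fun n hn => (pow_dvd_pow p hn).trans (ha n)

theorem eq_zero_of_map_single_eq_zero (Φ : (ℕ → ℤ) →+ ℤ) (h0 : ∀ n, Φ (Pi.single n 1) = 0) :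
    Φ = 0 := by
  ext a
  have hcop (n : ℕ) : IsCoprime ((2 : ℤ) ^ n) (3 ^ n) :=
    (Int.isCoprime_iff_gcd_eq_one.2 (by norm_num)).pow
  choose u v huv using hcop
  have hsplit : a = (fun n => a n * u n * 2 ^ n) + fun n => a n * v n * 3 ^ n := by
    funext n
    rw [Pi.add_apply]
    linear_combination (-a n) * huv n
  rw [hsplit, map_add, map_eq_zero_of_forall_pow_dvd Φ h0 le_rfl fun n => Dvd.intro_left _ rfl,
    map_eq_zero_of_forall_pow_dvd Φ h0 (by norm_num) fun n => Dvd.intro_left _ rfl]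
  rfl

/-- Exponents chosen so that `2 ^ dominatingExponent x K` beats twice the partial sum
`∑ n < K, 2 ^ dominatingExponent x n * x n`. -/
def dominatingExponent (x : ℕ → ℤ) (K : ℕ) : ℕ := ∑ n ∈ range K, ((x n).natAbs + 1)

theorem dominatingExponent_succ (x : ℕ → ℤ) (K : ℕ) :
    dominatingExponent x (K + 1) = dominatingExponent x K + (x K).natAbs + 1 := by
  simp only [dominatingExponent, sum_range_succ, add_assoc]

theorem monotone_dominatingExponent (x : ℕ → ℤ) : Monotone (dominatingExponent x) :=
  monotone_nat_of_le_succ fun K => by rw [dominatingExponent_succ]; omega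

theorem le_dominatingExponent (x : ℕ → ℤ) (K : ℕ) : K ≤ dominatingExponent x K := by
  induction K with
  | zero => exact Nat.zero_le _
  | succ K ih => rw [dominatingExponent_succ]; omega

theorem two_mul_abs_sum_lt_two_pow_dominatingExponent (x : ℕ → ℤ) (K : ℕ) :
    2 * |∑ n ∈ range K, 2 ^ dominatingExponent x n * x n| < 2 ^ dominatingExponent x K := by
  induction K with
  | zero => simp [dominatingExponent]
  | succ K ih =>
    set m := dominatingExponent x K
    set s := ∑ n ∈ range K, 2 ^ dominatingExponent x n * x n
    have hx : |x K| + 1 ≤ 2 ^ (x K).natAbs := by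
      rw [← Int.natCast_natAbs]
      exact_mod_cast Nat.lt_two_pow_self
    have hpos : (0 : ℤ) < 2 ^ m := by positivity
    have htri := abs_add_le s (2 ^ m * x K)
    rw [abs_mul, abs_of_pos hpos] at htri
    calc 2 * |∑ n ∈ range (K + 1), 2 ^ dominatingExponent x n * x n|
        = 2 * |s + 2 ^ m * x K| := by rw [sum_range_succ]
      _ < 2 ^ m * (2 * (|x K| + 1)) := by linarith
      _ ≤ 2 ^ m * (2 * 2 ^ (x K).natAbs) := by gcongr
      _ = 2 ^ dominatingExponent x (K + 1) := by rw [dominatingExponent_succ]; ring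

theorem exists_map_single_eq_zero (Φ : (ℕ → ℤ) →+ ℤ) : ∃ n, Φ (Pi.single n 1) = 0 := by
  by_contra! hx
  set x : ℕ → ℤ := fun n => Φ (Pi.single n 1)
  set m := dominatingExponent x
  set s : ℕ → ℤ := fun K => ∑ n ∈ range K, 2 ^ m n * x n
  set a : ℕ → ℤ := fun n => 2 ^ m n
  have hcong (K : ℕ) : 2 ^ m K ∣ Φ a - s K :=
    dvd_map_sub_sum Φ K fun n hn => pow_dvd_pow 2 (monotone_dominatingExponent x hn)
  set K := (2 * Φ a).natAbs
  -- past `K`, both `Φ a` and the partial sums are too small to differ by a multiple of `2 ^ m K'`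
  have hΦa (K' : ℕ) (hK' : K ≤ K') : Φ a = s K' := by
    have hK : (K : ℤ) < 2 ^ m K' :=
      calc (K : ℤ) < 2 ^ K := by exact_mod_cast Nat.lt_two_pow_self
        _ ≤ 2 ^ m K' := pow_le_pow_right₀ (by norm_num)
          (hK'.trans (le_dominatingExponent x K'))
    have hlt : |Φ a - s K'| < 2 ^ m K' := by
      have : (K : ℤ) = 2 * |Φ a| := by simp [K, abs_mul]
      linarith [abs_sub (Φ a) (s K'),
        two_mul_abs_sum_lt_two_pow_dominatingExponent x K']
    linarith [Int.eq_zero_of_abs_lt_dvd (hcong K') hlt]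
  have : 2 ^ m K * x K = 0 := by
    have hsucc : s (K + 1) = s K + 2 ^ m K * x K := sum_range_succ _ _
    linarith [hΦa K le_rfl, hΦa (K + 1) K.le_succ]
  exact hx K (by simpa using this)

end SpeckerLemmas

section Fibres

variable {I : Type*} (idx : I → ℕ) (f : I → ℤ)

def fiberwiseMul : (ℕ → ℤ) →+ (I → ℤ) where
  toFun a i := a (idx i) * f i
  map_zero' := by ext; simp
  map_add' a b := by ext; simp [add_mul]

theorem fiberwiseMul_single (n : ℕ) :
    fiberwiseMul idx f (Pi.single n 1) = {i | idx i = n}.indicator f := by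
  ext i
  by_cases h : idx i = n <;> simp [fiberwiseMul, h]

theorem fiberwiseMul_one : fiberwiseMul idx f 1 = f := by
  ext i
  simp [fiberwiseMul]

variable (ψ : (I → ℤ) →+ ℤ)

theorem map_eq_zero_of_map_indicator_eq_zero
    (h : ∀ n, ψ ({i | idx i = n}.indicator f) = 0) : ψ f = 0 := by
  have := eq_zero_of_map_single_eq_zero (ψ.comp (fiberwiseMul idx f))
    fun n => by simpa [fiberwiseMul_single] using h n
  simpa [fiberwiseMul_one] using DFunLike.congr_fun this 1

theorem exists_map_indicator_eq_zero : ∃ n, ψ ({i | idx i = n}.indicator f) = 0 := by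
  simpa [fiberwiseMul_single] using exists_map_single_eq_zero (ψ.comp (fiberwiseMul idx f))

end Fibres

section NullSets

variable {I : Type*} (ψ : (I → ℤ) →+ ℤ)

def IsNullSet (s : Set I) : Prop := ∀ f : I → ℤ, support f ⊆ s → ψ f = 0

variable {ψ}

theorem IsNullSet.mono {s t : Set I} (ht : IsNullSet ψ t) (hst : s ⊆ t) : IsNullSet ψ s :=
  fun f hf => ht f (hf.trans hst)

theorem isNullSet_empty : IsNullSet ψ ∅ := by
  intro f hf
  rw [subset_empty_iff, support_eq_empty_iff] at hf
  rw [hf, map_zero]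

theorem isNullSet_iUnion {s : ℕ → Set I} (hs : ∀ n, IsNullSet ψ (s n)) :
    IsNullSet ψ (⋃ n, s n) := by
  intro f hf
  have hidx (i : I) : ∃ n, f i ≠ 0 → i ∈ s n := by
    by_cases hi : f i = 0
    · exact ⟨0, fun h => absurd hi h⟩
    · exact (mem_iUnion.1 (hf hi)).imp fun n hn _ => hn
  choose idx hidx using hidx
  refine map_eq_zero_of_map_indicator_eq_zero idx f ψ fun n => hs n _ fun i hi => ?_
  rw [support_indicator] at hi
  exact hi.1 ▸ hidx i hi.2

theorem isNullSet_sUnion {S : Set (Set I)} (hS : S.Countable) (h : ∀ s ∈ S, IsNullSet ψ s) :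
    IsNullSet ψ (⋃₀ S) := by
  rcases S.eq_empty_or_nonempty with rfl | hne
  · simpa using isNullSet_empty
  · obtain ⟨s, rfl⟩ := hS.exists_eq_range hne
    rw [sUnion_range]
    exact isNullSet_iUnion fun n => h _ (mem_range_self n)

variable (ψ)

def conullFilter : Filter I :=
  .ofCountableUnion {s | IsNullSet ψ s} (fun _ hS h => isNullSet_sUnion hS h)
    fun _ ht _ hst => ht.mono hst

instance : CountableInterFilter (conullFilter ψ) :=
  countableInter_ofCountableUnion _ _ _

variable {ψ}

theorem mem_conullFilter {s : Set I} : s ∈ conullFilter ψ ↔ IsNullSet ψ sᶜ := Iff.rfl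

theorem conullFilter_neBot (hψ : ψ ≠ 0) : (conullFilter ψ).NeBot :=
  ⟨fun h => hψ <| AddMonoidHom.ext fun f =>
    mem_conullFilter.1 (empty_mem_iff_bot.2 h) f (by simp)⟩

theorem conullFilter_le {F : Filter I} (h : ∀ f : I → ℤ, {i | f i = 0} ∈ F → ψ f = 0) :
    conullFilter ψ ≤ F :=
  fun _ hs f hf => h f (mem_of_superset hs fun _ hi => notMem_support.1 fun hfi => hf hfi hi)

theorem exists_compl_mem_conullFilter {s : ℕ → Set I} (hs : Pairwise (Disjoint on s)) :
    ∃ n, (s n)ᶜ ∈ conullFilter ψ := by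
  simp only [mem_conullFilter, compl_compl]
  by_contra! h
  simp only [IsNullSet, not_forall] at h
  choose g hg hψg using h
  have hidx (i : I) : ∃ k, ∀ n, i ∈ s n → n = k := by
    by_cases hi : ∃ k, i ∈ s k
    · obtain ⟨k, hk⟩ := hi
      exact ⟨k, fun n hn => hs.eq (not_disjoint_iff.2 ⟨i, hn, hk⟩)⟩
    · push Not at hi
      exact ⟨0, fun n hn => absurd hn (hi n)⟩
  choose idx hidx using hidx
  obtain ⟨n, hn⟩ := exists_map_indicator_eq_zero idx (fun i => g (idx i) i) ψ
  have hglue : {i | idx i = n}.indicator (fun i => g (idx i) i) = g n := by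
    ext i
    by_cases hi : idx i = n
    · simp [hi]
    · rw [indicator_of_notMem (show i ∉ {i | idx i = n} from hi)]
      exact (notMem_support.1 fun hmem => hi (hidx i n (hg n hmem)).symm).symm
  exact hψg n (hglue ▸ hn)

end NullSets

theorem exists_pairwise_disjoint_of_forall_split {α : Type*} (P : Set α → Prop) {A : Set α}
    (hA : P A) (hsplit : ∀ B, P B → ∃ S ⊆ B, P S ∧ P (B \ S)) :
    ∃ s : ℕ → Set α, Pairwise (Disjoint on s) ∧ ∀ n, P (s n) := by
  have hpiece (B : Set α) : ∃ S, P B → S ⊆ B ∧ P S ∧ P (B \ S) := by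
    by_cases hB : P B
    · obtain ⟨S, hSB, hS⟩ := hsplit B hB
      exact ⟨S, fun _ => ⟨hSB, hS⟩⟩
    · exact ⟨∅, fun h => absurd h hB⟩
  choose piece hpiece using hpiece
  set T : ℕ → Set α := fun n => (fun B => B \ piece B)^[n] A
  have hT_succ (n : ℕ) : T (n + 1) = T n \ piece (T n) := iterate_succ_apply' _ n A
  have hT (n : ℕ) : P (T n) := by
    induction n with
    | zero => exact hA
    | succ n ih => rw [hT_succ]; exact (hpiece _ ih).2.2
  have hT_anti : Antitone T := antitone_nat_of_succ_le fun n => hT_succ n ▸ sdiff_subset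
  refine ⟨fun n => piece (T n), (pairwise_disjoint_on _).2 fun m n hmn => ?_,
    fun n => (hpiece _ (hT n)).2.1⟩
  have hsub : piece (T n) ⊆ T m \ piece (T m) :=
    (hpiece _ (hT n)).1.trans ((hT_anti hmn).trans_eq (hT_succ m))
  exact disjoint_sdiff_right.mono_right hsub

theorem Filter.exists_ultrafilter_eq_inf_principal {α : Type*} (l : Filter α) [l.NeBot]
    (h : ∀ s : ℕ → Set α, Pairwise (Disjoint on s) → ∃ n, (s n)ᶜ ∈ l) :
    ∃ (U : Ultrafilter α) (A : Set α), (U : Filter α) = l ⊓ 𝓟 A := by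
  obtain ⟨A, hA, hatom⟩ : ∃ A : Set α, Aᶜ ∉ l ∧ ∀ S ⊆ A, Sᶜ ∉ l → (A \ S)ᶜ ∈ l := by
    by_contra! hsplit
    obtain ⟨s, hs, hpos⟩ :=
      exists_pairwise_disjoint_of_forall_split (fun S => Sᶜ ∉ l) (A := univ)
        (by rw [compl_univ]; exact empty_notMem l) hsplit
    obtain ⟨n, hn⟩ := h s hs
    exact hpos n hn
  refine ⟨.ofComplNotMemIff (l ⊓ 𝓟 A) fun S => ?_, A, rfl⟩
  rw [mem_inf_principal', mem_inf_principal', ← Set.compl_inter, union_comm, ← Set.compl_sdiff]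
  constructor
  · intro hAS
    simpa [sdiff_self_inter] using hatom (A ∩ S) inter_subset_left hAS
  · intro hS hAS
    apply hA
    simpa [← compl_union, sdiff_union_inter] using inter_mem hS hAS

/-- If the filter `F` on `I` cannot be extended to a countably complete
(`ω₁`-complete) ultrafilter, then the group `A = ℤ^I / F` has trivial dual. -/
theorem stmt11 {I : Type u} (F : Filter I)
    (hnoext : ¬ ∃ U : Ultrafilter I, (∀ s ∈ F, s ∈ U) ∧
      ∀ s : Set (Set I), s.Countable → (∀ t ∈ s, t ∈ U) → ⋂₀ s ∈ U) :
    ∀ φ : ((I → ℤ) ⧸ zeroSetSubgroup F) →+ ℤ, φ = 0 := by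
  intro φ
  by_contra hφ
  set ψ := φ.comp (QuotientAddGroup.mk' (zeroSetSubgroup F))
  have hψ : ψ ≠ 0 := fun h => hφ (QuotientAddGroup.addMonoidHom_ext _ (by simpa using h))
  have := conullFilter_neBot hψ
  have hF : conullFilter ψ ≤ F := conullFilter_le fun f hf => by
    simp [ψ, (QuotientAddGroup.eq_zero_iff f).2 (show f ∈ zeroSetSubgroup F from hf)]
  obtain ⟨U, A, hU⟩ := (conullFilter ψ).exists_ultrafilter_eq_inf_principal
    fun _ hs => exists_compl_mem_conullFilter hs
  have : CountableInterFilter (U : Filter I) := hU ▸ inferInstance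
  refine hnoext ⟨U, fun s hs => ?_,
    fun S hS h => (countable_sInter_mem hS).2 h⟩
  rw [← Ultrafilter.mem_coe, hU]
  exact mem_inf_of_left (hF hs)
end

section
/- In ZFC, for every natural number n ≥ 1, the cardinal ℵ_n does not belong to the class S: there exists a nonempty system S of homogeneous ℤ-linear equations such that every nonempty subsystem of cardinality < ℵ_n has a nontrivial solution in ℤ (all variables mapped to nonzero integers), yet S itself has no weakly nontrivial solution in ℤ. (This follows from the existence in ZFC of ℵ_n-free abelian groups with trivial dual, combined with Proposition on subsystem solvability.) -/
universe u

/-- Infinite descent: an integer sequence with `u k = (k+2) * u (k+1)` is identically 0. -/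
private lemma aux_desc (u : ℕ → ℤ) (hu : ∀ k, u k = ((k : ℤ) + 2) * u (k + 1)) :
    ∀ k, u k = 0 := by
  have key : ∀ N k, (u k).natAbs ≤ N → u k = 0 := by
    intro N
    induction N with
    | zero => intro k hk; exact Int.natAbs_eq_zero.mp (Nat.le_zero.mp hk)
    | succ N ih =>
      intro k hk
      have h1 : (u (k + 1)).natAbs ≤ N := by
        by_contra hgt
        push_neg at hgt
        have h2 : (u k).natAbs = (k + 2) * (u (k + 1)).natAbs := by
          rw [hu k, Int.natAbs_mul, show ((k : ℤ) + 2) = ((k + 2 : ℕ) : ℤ) by push_cast; ring,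
            Int.natAbs_natCast]
        have h3 : 2 * (N + 1) ≤ (k + 2) * (u (k + 1)).natAbs :=
          Nat.mul_le_mul (by omega) (by omega)
        omega
      rw [hu k, ih (k + 1) h1, mul_zero]
  intro k; exact key _ k le_rfl


/-- `ℵ_n ∉ 𝒮` for `1 ≤ n`: given (as provided by Göbel–Shelah in ZFC) a nontrivial
`ℵ_n`-free abelian group `G` with trivial dual, there is a nonempty system of
homogeneous `ℤ`-linear equations every nonempty subsystem of which of cardinality
`< ℵ_n` is nontrivially solvable in `ℤ`, while the whole system has not even a
weakly nontrivial solution in `ℤ`. -/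
theorem stmt12 (n : ℕ) (hn : 1 ≤ n) {G : Type u} [AddCommGroup G] [Nontrivial G]
    (hfree : ∀ s : Set G, Cardinal.mk s < Cardinal.aleph n →
      Module.Free ℤ (Submodule.span ℤ s))
    (hdual : ∀ φ : G →+ ℤ, φ = 0) :
    ∃ (J X : Type u) (k : J → (X →₀ ℤ)), Nonempty J ∧
      (∀ T : Set J, T.Nonempty → Cardinal.mk T < Cardinal.aleph n →
        ∃ f : X → ℤ, (∀ x, f x ≠ 0) ∧ ∀ j ∈ T, ((k j).sum fun x a => a * f x) = 0) ∧
      ¬ ∃ f : X → ℤ, (∀ j, ((k j).sum fun x a => a * f x) = 0) ∧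
          ∃ x, (∃ j, k j x ≠ 0) ∧ f x ≠ 0 := by
  classical
  have haleph0 : Cardinal.aleph0 < Cardinal.aleph n := by
    rw [← Cardinal.aleph_zero]
    exact Cardinal.aleph_lt_aleph.mpr (by exact_mod_cast Nat.pos_of_ne_zero (by omega))
  -- Step 1 : find p ≥ 2 and a ∈ G with a ∉ pG
  obtain ⟨p, hp2, a, ha⟩ : ∃ p : ℕ, 2 ≤ p ∧ ∃ a : G, ∀ g : G, a ≠ p • g := by
    by_contra H
    push_neg at H
    -- H : ∀ p ≥ 2, ∀ a, ∃ g, a = p • g ;  hence G is divisible, contradiction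
    obtain ⟨x₀, hx₀⟩ := exists_ne (0 : G)
    have Hd : ∀ (k : ℕ) (x : G), ∃ g : G, x = (k + 2) • g := by
      intro k x
      obtain ⟨g, hg⟩ := H (k + 2) (by omega) x
      exact ⟨g, hg⟩
    choose nx hnx using Hd
    let g : ℕ → G := fun k => Nat.rec x₀ (fun k gk => nx k gk) k
    have hgrec : ∀ k, g k = (k + 2) • g (k + 1) := fun k => hnx k (g k)
    have hg0 : g 0 = x₀ := rfl
    set s : Set G := Set.range g with hs
    have hcard : Cardinal.mk s < Cardinal.aleph n := by
      have : s.Countable := Set.countable_range g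
      exact lt_of_le_of_lt this.le_aleph0 haleph0
    haveI := hfree s hcard
    set M := Submodule.span ℤ s with hM
    have hmem : ∀ k, g k ∈ M := fun k => Submodule.subset_span ⟨k, rfl⟩
    haveI : Nontrivial M := by
      refine ⟨⟨g 0, hmem 0⟩, 0, ?_⟩
      simp only [ne_eq, Submodule.mk_eq_zero]
      rw [hg0]; exact hx₀
    let b := Module.Free.chooseBasis ℤ M
    obtain ⟨i⟩ := b.index_nonempty
    let φ : M →ₗ[ℤ] ℤ := b.coord i
    set u : ℕ → ℤ := fun k => φ ⟨g k, hmem k⟩ with hudef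
    have hu : ∀ k, u k = ((k : ℤ) + 2) * u (k + 1) := by
      intro k
      have hx : (⟨g k, hmem k⟩ : M) = (k + 2 : ℕ) • (⟨g (k + 1), hmem (k + 1)⟩ : M) := by
        apply Subtype.ext
        simpa using hgrec k
      calc u k = φ (⟨g k, hmem k⟩ : M) := rfl
        _ = φ ((k + 2 : ℕ) • (⟨g (k + 1), hmem (k + 1)⟩ : M)) := by rw [hx]
        _ = (k + 2 : ℕ) • φ (⟨g (k + 1), hmem (k + 1)⟩ : M) := map_nsmul φ _ _
        _ = ((k : ℤ) + 2) * u (k + 1) := by push_cast [nsmul_eq_mul]; ring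
    have hu0 := aux_desc u hu
    have hφ0 : φ = 0 := by
      apply LinearMap.ext_on (Submodule.span_setOf_mem_eq_top)
      rintro ⟨x, hx⟩ hxs
      obtain ⟨k, hk⟩ := hxs
      have : (⟨x, hx⟩ : M) = ⟨g k, hmem k⟩ := Subtype.ext hk.symm
      rw [this]
      exact hu0 k
    have : (1 : ℤ) = 0 := by
      have h1 : φ (b i) = 1 := by simp [φ]
      rw [hφ0] at h1
      simpa using h1.symm
    exact one_ne_zero this
  -- Step 2: the system
  have hp0 : ((p : ℤ)) ≠ 0 := by exact_mod_cast (by omega : p ≠ 0)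
  refine ⟨(G × G) ⊕ PUnit, Option {g : G // g ≠ 0}, ?_⟩
  set X := Option {g : G // g ≠ 0} with hX
  let v : G → X := fun g => if h : g = 0 then none else some ⟨g, h⟩
  let elemOf : X → G := fun x => x.elim 0 Subtype.val
  have helem : ∀ g, elemOf (v g) = g := by
    intro g
    by_cases h : g = 0
    · subst h; simp [v, elemOf]
    · simp [v, dif_neg h, elemOf]
  have hsurj : ∀ x : X, v (elemOf x) = x := by
    rintro (_ | ⟨g, hg⟩)
    · simp [v, elemOf]
    · simp [v, elemOf, dif_neg hg]
  let k : (G × G) ⊕ PUnit → (X →₀ ℤ) :=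
    Sum.elim
      (fun gh => Finsupp.single (v gh.1) 1 + Finsupp.single (v gh.2) 1
        - Finsupp.single (v (gh.1 + gh.2)) 1 - Finsupp.single (v 0) 1)
      (fun _ => Finsupp.single (v a) 1 + Finsupp.single (v 0) ((p : ℤ) - 1))
  have keval : ∀ (f : X → ℤ) (l : X →₀ ℤ),
      (l.sum fun x c => c * f x) = Finsupp.linearCombination ℤ f l := by
    intro f l
    rw [Finsupp.linearCombination_apply]
    simp [Finsupp.sum, smul_eq_mul]
  have hk1 : ∀ (gh : G × G), k (Sum.inl gh) = Finsupp.single (v gh.1) 1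
      + Finsupp.single (v gh.2) 1 - Finsupp.single (v (gh.1 + gh.2)) 1
      - Finsupp.single (v 0) 1 := fun _ => rfl
  have hk2 : ∀ (z : PUnit.{u+1}), k (Sum.inr z)
      = Finsupp.single (v a) 1 + Finsupp.single (v 0) ((p : ℤ) - 1) := fun _ => rfl
  have kevalL : ∀ (f : X → ℤ) (g h : G), ((k (Sum.inl (g, h))).sum fun x c => c * f x)
      = f (v g) + f (v h) - f (v (g + h)) - f (v 0) := by
    intro f g h
    rw [keval, hk1]
    simp [map_add, map_sub, Finsupp.linearCombination_single]
  have kevalR : ∀ (f : X → ℤ) (z : PUnit.{u+1}), ((k (Sum.inr z)).sum fun x c => c * f x)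
      = f (v a) + ((p : ℤ) - 1) * f (v 0) := by
    intro f z
    rw [keval, hk2]
    simp [map_add, Finsupp.linearCombination_single]
    ring
  refine ⟨k, ⟨Sum.inr PUnit.unit⟩, ?_, ?_⟩
  · -- subsystems of size < ℵ_n are nontrivially solvable
    intro T _ hT
    let elems : (G × G) ⊕ PUnit → Set G :=
      Sum.elim (fun gh => {gh.1, gh.2, gh.1 + gh.2}) (fun _ => ∅)
    set s : Set G := insert 0 (insert a (⋃ j : T, elems j.1)) with hsdef
    have hscard : Cardinal.mk s < Cardinal.aleph n := by
      have h1 : Cardinal.mk (⋃ j : T, elems j.1) ≤ Cardinal.mk T * Cardinal.aleph0 := by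
        refine (Cardinal.mk_iUnion_le _).trans ?_
        gcongr
        refine ciSup_le' fun j => ?_
        have : (elems j.1).Countable := by
          rcases j.1 with gh | z
          · exact ((Set.finite_singleton _).insert _ |>.insert _).countable
          · exact Set.countable_empty
        exact this.le_aleph0
      have h2 : Cardinal.mk (⋃ j : T, elems j.1) < Cardinal.aleph n :=
        lt_of_le_of_lt h1 (Cardinal.mul_lt_of_lt (Cardinal.aleph0_le_aleph _) hT haleph0)
      have h3 : (1 : Cardinal) < Cardinal.aleph n :=
        lt_trans Cardinal.one_lt_aleph0 haleph0
      calc Cardinal.mk s ≤ Cardinal.mk (insert a (⋃ j : T, elems j.1) : Set G) + 1 :=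
            Cardinal.mk_insert_le
        _ ≤ (Cardinal.mk (⋃ j : T, elems j.1) + 1) + 1 := by
            gcongr; exact Cardinal.mk_insert_le
        _ < Cardinal.aleph n := by
            apply Cardinal.add_lt_of_lt (Cardinal.aleph0_le_aleph _) _ h3
            exact Cardinal.add_lt_of_lt (Cardinal.aleph0_le_aleph _) h2 h3
    haveI := hfree s hscard
    set M := Submodule.span ℤ s with hMdef
    have haM : a ∈ M := Submodule.subset_span (Set.mem_insert_iff.mpr
      (Or.inr (Set.mem_insert a _)))
    have h0M : (0 : G) ∈ M := zero_mem _
    have hjmem : ∀ j ∈ T, ∀ x ∈ elems j, x ∈ M := by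
      intro j hj x hx
      apply Submodule.subset_span
      rw [hsdef]
      exact Set.mem_insert_iff.mpr (Or.inr (Set.mem_insert_iff.mpr
        (Or.inr (Set.mem_iUnion.mpr ⟨⟨j, hj⟩, hx⟩))))
    -- find a coordinate functional with value not divisible by p at a
    let b := Module.Free.chooseBasis ℤ M
    obtain ⟨i, hi⟩ : ∃ i, ¬ ((p : ℤ) ∣ (b.repr ⟨a, haM⟩) i) := by
      by_contra hdvd
      push_neg at hdvd
      set r := b.repr ⟨a, haM⟩ with hr
      let cfs : Module.Free.ChooseBasisIndex ℤ M →₀ ℤ :=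
        r.mapRange (fun t => t / p) (by simp)
      have hpc : (p : ℤ) • cfs = r := by
        ext j
        simp only [Finsupp.smul_apply, cfs, Finsupp.mapRange_apply, smul_eq_mul]
        exact Int.mul_ediv_cancel' (hdvd j)
      have : (⟨a, haM⟩ : M) = (p : ℤ) • (b.repr.symm cfs) := by
        have := congrArg b.repr.symm hpc
        rw [map_smul] at this
        rw [this, hr, LinearEquiv.symm_apply_apply]
      apply ha ((b.repr.symm cfs : M) : G)
      have := congrArg (Subtype.val) this
      simpa [natCast_zsmul] using this
    let ψ : M →ₗ[ℤ] ℤ := b.coord i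
    have hψa : ¬ ((p : ℤ) ∣ ψ ⟨a, haM⟩) := hi
    set c : ℤ := - ψ ⟨a, haM⟩ with hc
    let F : G → ℤ := fun g => if hg : g ∈ M then (p : ℤ) * ψ ⟨g, hg⟩ + c else 1
    refine ⟨fun x => F (elemOf x), ?_, ?_⟩
    · intro x
      simp only [F]
      split
      · rename_i hg
        intro h0
        apply hψa
        refine ⟨ψ ⟨elemOf x, hg⟩, ?_⟩
        rw [hc] at h0
        linarith
      · exact one_ne_zero
    · intro j hj
      have hF : ∀ (g : G) (hg : g ∈ M), F g = (p : ℤ) * ψ ⟨g, hg⟩ + c := by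
        intro g hg; simp only [F]; rw [dif_pos hg]
      have hψ0 : ψ ⟨0, h0M⟩ = 0 := by
        have : (⟨0, h0M⟩ : M) = 0 := rfl
        rw [this, map_zero]
      have hψadd : ∀ (x y : G) (hx : x ∈ M) (hy : y ∈ M),
          ψ ⟨x + y, add_mem hx hy⟩ = ψ ⟨x, hx⟩ + ψ ⟨y, hy⟩ := by
        intro x y hx hy
        rw [← map_add]
        rfl
      rcases j with gh | z
      · obtain ⟨g, h⟩ := gh
        have hgM : g ∈ M := hjmem _ hj g (by simp [elems])
        have hhM : h ∈ M := hjmem _ hj h (by simp [elems])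
        have hghM : g + h ∈ M := add_mem hgM hhM
        rw [kevalL]
        simp only [helem]
        rw [hF g hgM, hF h hhM, hF (g + h) hghM, hF 0 h0M, hψ0, hψadd g h hgM hhM]
        ring
      · rw [kevalR]
        simp only [helem]
        rw [hF a haM, hF 0 h0M, hψ0, hc]
        ring
  · -- the whole system has no weakly nontrivial solution
    rintro ⟨f, hf, x, -, hx⟩
    have heq : ∀ g h : G, f (v g) + f (v h) - f (v (g + h)) - f (v 0) = 0 := by
      intro g h
      rw [← kevalL f g h]
      exact hf (Sum.inl (g, h))
    let F : G →+ ℤ := AddMonoidHom.mk' (fun g => f (v g) - f (v 0)) (by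
      intro g h
      have := heq g h
      linarith)
    have hF := hdual F
    have hconst : ∀ g, f (v g) = f (v 0) := by
      intro g
      have h1 : F g = 0 := by rw [hF]; rfl
      have h2 : F g = f (v g) - f (v 0) := rfl
      linarith [h2 ▸ h1]
    have hkill := hf (Sum.inr PUnit.unit)
    rw [kevalR] at hkill
    rw [hconst a] at hkill
    have h0 : f (v 0) = 0 := by
      have hmul : (p : ℤ) * f (v 0) = 0 := by linarith [hkill]
      rcases mul_eq_zero.mp hmul with h | h
      · exact absurd h hp0
      · exact h
    apply hx
    rw [← hsurj x, hconst (elemOf x), h0]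
end

section
/- Let R be an infinite commutative noetherian domain and M a free R-module of infinite rank μ whose free generators are {g_β : β < μ}. Suppose (M_α : α ≤ σ) is a filtration of M (M_0 = 0, continuous at limits, M_σ = M) with M_{α+1} = M_α + ⟨a_α⟩ and a_α ∉ M_α for all α < σ. Then there exists an R-module homomorphism ψ : M → R with ψ(a_α) ≠ 0 for every α < σ. -/
/-!
In coordinates `A α = b.repr (a α)` we look for `c : β → R` with `∑ⱼ c j * A α j ≠ 0` for all `α`.

Noetherianity makes the family sparse: inside a finitely generated submodule only finitely many
`A α` avoid the span of their predecessors, so inside a countably generated one only countably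
many do. If the coordinates are countable, enumerate them; the constraint of `α` is affine, with
nonzero slope, in the value at the last coordinate of its support, and only finitely many
constraints share a last coordinate, so the values can be chosen one at a time since `R` is
infinite.

In general call `B ⊆ β` closed if every `A α` lying in `R^(B) + span (A '' Iio α)` is supported
in `B`. A closed set together with countably many coordinates lies in a closed set with
countable excess, and a solution of the constraints caught by a closed set extends across such
an excess by the countable case, applied to the parts of the `A α` outside `B`. Zorn's lemma on
such partial solutions finishes the proof.
-/

open Set Submodule Finsupp

theorem exists_seq_forall_mem {X : Type*} [Nonempty X] (S : ℕ → (ℕ → X) → Set X)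
    (hS : ∀ n v, (S n v).Nonempty) (hloc : ∀ n v w, (∀ m < n, v m = w m) → S n v = S n w) :
    ∃ v : ℕ → X, ∀ n, v n ∈ S n v := by
  choose pick hpick using hS
  let past (n : ℕ) (ih : ∀ m < n, X) : ℕ → X := fun m =>
    if h : m < n then ih m h else Classical.arbitrary X
  let v : ℕ → X := fun n => Nat.strongRec (fun n ih => pick n (past n ih)) n
  refine ⟨v, fun n => ?_⟩
  have hv : v n = pick n (past n fun m _ => v m) := Nat.strongRec_eq _ n
  rw [hv, ← hloc n _ v fun m hm => dif_pos hm]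
  exact hpick _ _

section LinearCombination

variable {R β : Type*} [Ring R]

theorem Finsupp.linearCombination_congr_of_eqOn {c c' : β → R} {f : β →₀ R}
    (h : EqOn c c' f.support) : linearCombination R c f = linearCombination R c' f := by
  simp only [linearCombination_apply]
  exact Finset.sum_congr rfl fun j hj => congrArg (f j • ·) (h hj)

theorem Finsupp.linearCombination_update_sub_update [DecidableEq β] (c : β → R) (f : β →₀ R)
    (j : β) (x y : R) :
    linearCombination R (Function.update c j x) f - linearCombination R (Function.update c j y) f
      = f j * (x - y) := by
  rw [linearCombination_apply, linearCombination_apply, ← Finsupp.sum_sub,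
    Finsupp.sum_eq_single j]
  · simp [mul_sub]
  · intro i _ hij
    simp [Function.update_of_ne hij]
  · simp

theorem Finsupp.linearCombination_piecewise (s : Set β) [DecidablePred (· ∈ s)]
    (c w : β → R) (f : β →₀ R) :
    linearCombination R (s.piecewise c w) f
      = linearCombination R c (f.filter (· ∈ s)) + linearCombination R w (f.filter (· ∉ s)) := by
  conv_lhs => rw [← f.filter_add_filter_not (· ∈ s)]
  rw [map_add]
  congr 1 <;> exact linearCombination_congr_of_eqOn fun j hj => by simp_all

theorem exists_linearCombination_ne_of_finite_stages [NoZeroDivisors R] [Infinite R] {ι : Type*}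
    (t : ι → β →₀ R) (k : ι → R) (r : β → ℕ) (top : ι → β) (htop : ∀ i, t i (top i) ≠ 0)
    (hlt : ∀ i j, t i j ≠ 0 → j ≠ top i → r j < r (top i))
    (hfin : ∀ n, {i | r (top i) = n}.Finite) :
    ∃ w : β → R, ∀ i, linearCombination R w (t i) ≠ k i := by
  classical
  have hagree : ∀ i (v : ℕ → R) x, EqOn (Function.update v (r (top i)) x ∘ r)
      (Function.update (v ∘ r) (top i) x) (t i).support := by
    intro i v x j hj
    by_cases hji : j = top i
    · subst hji
      simp
    · have hrj := (hlt i j (mem_support_iff.1 hj) hji).ne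
      simp [Function.update_of_ne hji, Function.update_of_ne hrj]
  have hloc : ∀ i (v w : ℕ → R) x, (∀ m < r (top i), v m = w m) →
      linearCombination R (Function.update v (r (top i)) x ∘ r) (t i)
        = linearCombination R (Function.update w (r (top i)) x ∘ r) (t i) := by
    intro i v w x h
    rw [linearCombination_congr_of_eqOn (hagree i v x),
      linearCombination_congr_of_eqOn (hagree i w x)]
    refine linearCombination_congr_of_eqOn fun j hj => ?_
    by_cases hji : j = top i
    · subst hji
      simp
    · simp [Function.update_of_ne hji, h _ (hlt i j (mem_support_iff.1 hj) hji)]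
  -- the constraint of `i` is affine in the value at its top coordinate, with nonzero slope
  have hunique : ∀ i (v : ℕ → R), {x | linearCombination R
      (Function.update v (r (top i)) x ∘ r) (t i) = k i}.Subsingleton := by
    intro i v x hx y hy
    have h := linearCombination_update_sub_update (v ∘ r) (t i) (top i) x y
    rw [← linearCombination_congr_of_eqOn (hagree i v x),
      ← linearCombination_congr_of_eqOn (hagree i v y), hx, hy, sub_self] at h
    exact sub_eq_zero.1 ((mul_eq_zero.1 h.symm).resolve_left (htop i))
  let S : ℕ → (ℕ → R) → Set R := fun n v =>
    {x | ∀ i, r (top i) = n → linearCombination R (Function.update v n x ∘ r) (t i) ≠ k i}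
  have hS : ∀ n v, (S n v).Nonempty := by
    intro n v
    have hbad : (⋃ i ∈ {i | r (top i) = n},
        {x | linearCombination R (Function.update v (r (top i)) x ∘ r) (t i) = k i}).Finite :=
      (hfin n).biUnion fun i _ => (hunique i v).finite
    obtain ⟨x, hx⟩ := hbad.infinite_compl.nonempty
    exact ⟨x, fun i hi h => hx (mem_biUnion (x := i) hi (by subst hi; exact h))⟩
  obtain ⟨v, hv⟩ := exists_seq_forall_mem S hS fun n v w h => by
    ext x
    refine forall_congr' fun i => forall_congr' fun hi => ?_
    subst hi
    rw [hloc i v w x h]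
  exact ⟨v ∘ r, fun i => by simpa using hv (r (top i)) i rfl⟩

end LinearCombination

section NewElements

variable {R M ι : Type*} [Ring R] [AddCommGroup M] [Module R M] [LinearOrder ι]

theorem notMem_span_image_Iio_of_eq_add {P : Submodule R M} {A y t : ι → M}
    (hyt : ∀ γ, A γ = y γ + t γ) (hy : ∀ γ, y γ ∈ P ⊔ span R (A '' Iio γ)) {α : ι}
    (hα : A α ∉ P ⊔ span R (A '' Iio α)) : t α ∉ span R (t '' Iio α) := by
  refine fun ht => hα ?_
  rw [hyt α]
  refine add_mem (hy α) (span_le.2 ?_ ht)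
  rintro _ ⟨γ, hγ, rfl⟩
  rw [eq_sub_of_add_eq' (hyt γ).symm]
  exact sub_mem (mem_sup_right (subset_span ⟨γ, hγ, rfl⟩))
    (sup_le_sup_left (span_mono (image_mono (Iio_subset_Iio hγ.le))) P (hy γ))

variable [WellFoundedLT ι]

theorem finite_of_forall_notMem_span_image_Iio [IsNoetherian R M] {t : ι → M}
    (ht : ∀ i, t i ∉ span R (t '' Iio i)) : Finite ι := by
  have hmono : StrictMono fun i => span R (t '' Iic i) := fun i j hij =>
    lt_of_le_of_ne (span_mono (image_mono (Iic_subset_Iic.2 hij.le))) fun h =>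
      ht j (span_mono (image_mono (Iic_subset_Iio.2 hij)) (h.ge (subset_span ⟨j, le_rfl, rfl⟩)))
  have := hmono.wellFoundedGT
  exact Finite.of_wellFoundedLT_wellFoundedGT ι

theorem finite_setOf_mem_notMem_span_image_Iio (N : Submodule R M) [IsNoetherian R N]
    (t : ι → M) : {i | t i ∈ N ∧ t i ∉ span R (t '' Iio i)}.Finite := by
  set S := {i | t i ∈ N ∧ t i ∉ span R (t '' Iio i)}
  let u : S → N := fun i => ⟨t i, i.2.1⟩
  refine finite_coe_iff.1
    (finite_of_forall_notMem_span_image_Iio (R := R) (t := u) fun i hi => i.2.2 ?_)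
  have := mem_map_of_mem (f := N.subtype) hi
  rw [map_span, ← image_comp] at this
  exact span_mono (by rintro _ ⟨j, hj, rfl⟩; exact ⟨j, hj, rfl⟩) this

variable {β : Type*} [IsNoetherianRing R]

theorem finite_setOf_mem_supported_notMem_span_image_Iio {F : Set β} (hF : F.Finite)
    (t : ι → β →₀ R) : {i | t i ∈ supported R R F ∧ t i ∉ span R (t '' Iio i)}.Finite := by
  have : Finite F := hF
  have : Module.Finite R (supported R R F) := Module.Finite.equiv (supportedEquivFinsupp F).symm
  have := isNoetherian_of_isNoetherianRing_of_finite R (supported R R F)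
  exact finite_setOf_mem_notMem_span_image_Iio _ t

theorem countable_setOf_mem_supported_notMem_span_image_Iio {C : Set β} (hC : C.Countable)
    (t : ι → β →₀ R) : {i | t i ∈ supported R R C ∧ t i ∉ span R (t '' Iio i)}.Countable := by
  refine ((countable_ofPred_finite_subset hC).biUnion fun F hF =>
    (finite_setOf_mem_supported_notMem_span_image_Iio hF.1 t).countable).mono ?_
  rintro i ⟨hiC, hnew⟩
  exact mem_biUnion (x := ((t i).support : Set β))
    ⟨(t i).support.finite_toSet, (mem_supported R _).1 hiC⟩
    ⟨(mem_supported R _).2 subset_rfl, hnew⟩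

variable [NoZeroDivisors R] [Infinite R]

theorem exists_linearCombination_ne_of_countable (t : ι → β →₀ R) (k : ι → R) {s : Set ι}
    {D : Set β} (hD : D.Countable) (hsupp : ∀ α ∈ s, ↑(t α).support ⊆ D)
    (hnew : ∀ α ∈ s, t α ∉ span R (t '' Iio α)) :
    ∃ w : β → R, ∀ α ∈ s, linearCombination R w (t α) ≠ k α := by
  obtain ⟨r, hr⟩ := countable_iff_exists_injOn.1 hD
  have hne : ∀ α : s, (t α).support.Nonempty := fun α =>
    support_nonempty_iff.2 fun h0 => hnew α α.2 (h0 ▸ zero_mem _)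
  choose top htop hmax using fun α : s => (t α).support.exists_max_image r (hne α)
  refine (exists_linearCombination_ne_of_finite_stages (fun α : s => t α) (fun α => k α) r top
    (fun α => mem_support_iff.1 (htop α)) ?_ ?_).imp fun w hw α hα => hw ⟨α, hα⟩
  · intro α j hj hjtop
    exact (hmax α j (mem_support_iff.2 hj)).lt_of_ne fun h =>
      hjtop (hr (hsupp α α.2 (mem_support_iff.2 hj)) (hsupp α α.2 (htop α)) h)
  · intro n
    have hF : (D ∩ r ⁻¹' Iic n).Finite :=
      Finite.of_finite_image ((finite_Iic n).subset (image_subset_iff.2 fun j hj => hj.2))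
        (hr.mono inter_subset_left)
    refine ((finite_setOf_mem_supported_notMem_span_image_Iio hF t).preimage
      Subtype.val_injective.injOn).subset ?_
    rintro α rfl
    exact ⟨(mem_supported R _).2 fun j hj => ⟨hsupp α α.2 hj, hmax α j hj⟩, hnew α α.2⟩

end NewElements

section Dependents

variable {R β σ : Type*} [Ring R] [LinearOrder σ] (A : σ → β →₀ R)

def dependents (B : Set β) : Set σ :=
  {α | A α ∈ supported R R B ⊔ span R (A '' Iio α)}

def IsDependentClosed (B : Set β) : Prop :=
  ∀ α ∈ dependents A B, ↑(A α).support ⊆ B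

variable {A}

theorem dependents_empty (hA : ∀ α, A α ∉ span R (A '' Iio α)) : dependents A ∅ = ∅ := by
  ext α
  simp [dependents, hA α]

theorem exists_mem_dependents_of_mem_dependents_iUnion {ι : Type*} [Nonempty ι] {D : ι → Set β}
    (hD : Directed (· ⊆ ·) D) {α : σ} (hα : α ∈ dependents A (⋃ i, D i)) :
    ∃ i, α ∈ dependents A (D i) := by
  have hdir : Directed (· ≤ ·) fun i => supported R R (D i) ⊔ span R (A '' Iio α) :=
    hD.mono_comp _ fun _ _ h => sup_le_sup_right (supported_mono h) _
  replace hα : A α ∈ supported R R (⋃ i, D i) ⊔ span R (A '' Iio α) := hα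
  rwa [supported_iUnion, iSup_sup, mem_iSup_of_directed _ hdir] at hα

theorem isDependentClosed_iUnion {ι : Type*} [Nonempty ι] {D : ι → Set β}
    (hD : Directed (· ⊆ ·) D) (h : ∀ i, ∃ k, ∀ α ∈ dependents A (D i), ↑(A α).support ⊆ D k) :
    IsDependentClosed A (⋃ i, D i) := by
  intro α hα
  obtain ⟨i, hi⟩ := exists_mem_dependents_of_mem_dependents_iUnion hD hα
  obtain ⟨k, hk⟩ := h i
  exact (hk α hi).trans (subset_iUnion D k)

variable [IsNoetherianRing R] [WellFoundedLT σ]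

theorem countable_dependents_diff {B E : Set β} (h : (E \ B).Countable) :
    (dependents A E \ dependents A B).Countable := by
  have hdec : ∀ α, ∃ p : (β →₀ R) × (β →₀ R), A α = p.1 + p.2 ∧
      p.1 ∈ supported R R B ⊔ span R (A '' Iio α) ∧
      (α ∈ dependents A E → p.2 ∈ supported R R (E \ B)) := by
    intro α
    by_cases hα : α ∈ dependents A E
    · have hle : supported R R E ⊔ span R (A '' Iio α)
          ≤ (supported R R B ⊔ span R (A '' Iio α)) ⊔ supported R R (E \ B) := by
        rw [sup_right_comm, ← supported_union, union_sdiff_self]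
        exact sup_le_sup_right (supported_mono subset_union_right) _
      obtain ⟨y, hy, z, hz, hyz⟩ := mem_sup.1 (hle hα)
      exact ⟨(y, z), hyz.symm, hy, fun _ => hz⟩
    · exact ⟨(0, A α), (zero_add _).symm, zero_mem _, fun h => absurd h hα⟩
  choose p hp using hdec
  refine (countable_setOf_mem_supported_notMem_span_image_Iio h fun α => (p α).2).mono ?_
  rintro α ⟨hE, hB⟩
  exact ⟨(hp α).2.2 hE,
    notMem_span_image_Iio_of_eq_add (fun γ => (hp γ).1) (fun γ => (hp γ).2.1) hB⟩

theorem exists_isDependentClosed_superset {B C : Set β} (hB : IsDependentClosed A B)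
    (hC : C.Countable) : ∃ B', B ∪ C ⊆ B' ∧ IsDependentClosed A B' ∧ (B' \ B).Countable := by
  let step : Set β → Set β := fun E => E ∪ ⋃ α ∈ dependents A E, ↑(A α).support
  let D : ℕ → Set β := fun n => step^[n] (B ∪ C)
  have hD : ∀ n, D (n + 1) = step (D n) := fun n => Function.iterate_succ_apply' step n _
  have hmono : Monotone D := monotone_nat_of_le_succ fun n => (hD n).symm ▸ subset_union_left
  have hcount : ∀ n, (D n \ B).Countable := by
    intro n
    induction n with
    | zero => exact hC.mono (by simp [D])
    | succ n ih =>
      refine (ih.union ((countable_dependents_diff (A := A) ih).biUnion fun α _ =>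
        (A α).support.finite_toSet.countable)).mono ?_
      rw [hD]
      rintro j ⟨hj | hj, hjB⟩
      · exact Or.inl ⟨hj, hjB⟩
      · obtain ⟨α, hα, hjα⟩ := mem_iUnion₂.1 hj
        exact Or.inr (mem_biUnion ⟨hα, fun hαB => hjB (hB α hαB hjα)⟩ hjα)
  refine ⟨⋃ n, D n, subset_iUnion D 0, isDependentClosed_iUnion hmono.directed_le fun n =>
    ⟨n + 1, fun α hα => ?_⟩, ?_⟩
  · rw [hD]
    exact (subset_biUnion_of_mem (u := fun α => ((A α).support : Set β)) hα).trans
      subset_union_right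
  · rw [iUnion_sdiff]
    exact countable_iUnion hcount

variable [NoZeroDivisors R] [Infinite R]

theorem exists_eqOn_linearCombination_ne_zero {B B' : Set β} (hB : IsDependentClosed A B)
    (hB' : IsDependentClosed A B') (hD : (B' \ B).Countable) {c : β → R}
    (hc : ∀ α ∈ dependents A B, linearCombination R c (A α) ≠ 0) :
    ∃ c', EqOn c' c B ∧ ∀ α ∈ dependents A B', linearCombination R c' (A α) ≠ 0 := by
  classical
  have hsupp : ∀ α ∈ dependents A B' \ dependents A B,
      ↑((A α).filter (· ∉ B)).support ⊆ B' \ B := by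
    rintro α ⟨hα, -⟩ j hj
    simp only [support_filter, Finset.coe_filter] at hj
    exact ⟨hB' α hα hj.1, hj.2⟩
  have hnew : ∀ α ∈ dependents A B' \ dependents A B, (A α).filter (· ∉ B) ∉
      span R ((fun γ => (A γ).filter (· ∉ B)) '' Iio α) := by
    rintro α ⟨-, hαB⟩
    refine notMem_span_image_Iio_of_eq_add (P := supported R R B)
      (fun γ => (filter_add_filter_not (A γ) (· ∈ B)).symm) (fun γ => mem_sup_left ?_) hαB
    exact (mem_supported R _).2 fun j hj => (by simpa using hj : _ ∧ j ∈ B).2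
  obtain ⟨w, hw⟩ := exists_linearCombination_ne_of_countable _
    (fun α => -linearCombination R c ((A α).filter (· ∈ B))) hD hsupp hnew
  refine ⟨B.piecewise c w, fun j hj => piecewise_eq_of_mem _ _ _ hj, fun α hα => ?_⟩
  by_cases hαB : α ∈ dependents A B
  · rw [linearCombination_congr_of_eqOn (f := A α) (c' := c) fun j hj =>
      piecewise_eq_of_mem _ _ _ (hB α hαB hj)]
    exact hc α hαB
  · rw [linearCombination_piecewise]
    exact fun h => hw α ⟨hα, hαB⟩ (eq_neg_of_add_eq_zero_right h)

end Dependents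

section PartialSolution

variable {R β σ : Type*} [Ring R] [LinearOrder σ]

structure PartialSolution (A : σ → β →₀ R) where
  dom : Set β
  val : β → R
  isDependentClosed : IsDependentClosed A dom
  ne_zero : ∀ α ∈ dependents A dom, linearCombination R val (A α) ≠ 0

namespace PartialSolution

variable {A : σ → β →₀ R}

instance : Preorder (PartialSolution A) where
  le p q := p.dom ⊆ q.dom ∧ EqOn p.val q.val p.dom
  le_refl p := ⟨subset_rfl, eqOn_refl _ _⟩
  le_trans p q r hpq hqr := ⟨hpq.1.trans hqr.1, fun j hj => (hpq.2 hj).trans (hqr.2 (hpq.1 hj))⟩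

theorem bddAbove_of_isChain {ch : Set (PartialSolution A)} (hch : IsChain (· ≤ ·) ch)
    (hne : ch.Nonempty) : BddAbove ch := by
  classical
  have : Nonempty ch := hne.to_subtype
  have hdir : Directed (· ⊆ ·) fun p : ch => p.1.dom := fun p q =>
    (hch.total p.2 q.2).elim (fun h => ⟨q, h.1, subset_rfl⟩) fun h => ⟨p, subset_rfl, h.1⟩
  let val : β → R := fun j => if h : ∃ p ∈ ch, j ∈ p.dom then h.choose.val j else 0
  have hval : ∀ p ∈ ch, EqOn val p.val p.dom := by
    intro p hp j hj
    have h : ∃ p ∈ ch, j ∈ p.dom := ⟨p, hp, hj⟩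
    obtain ⟨hq, hjq⟩ := h.choose_spec
    simp only [val, dif_pos h]
    exact (hch.total hq hp).elim (fun hle => hle.2 hjq) fun hle => (hle.2 hj).symm
  refine ⟨⟨⋃ p : ch, p.1.dom, val,
    isDependentClosed_iUnion hdir fun p => ⟨p, p.1.isDependentClosed⟩, fun α hα => ?_⟩,
    fun p hp => ⟨subset_iUnion (fun p : ch => p.1.dom) ⟨p, hp⟩, fun j hj => (hval p hp hj).symm⟩⟩
  obtain ⟨p, hp⟩ := exists_mem_dependents_of_mem_dependents_iUnion hdir hα
  rw [linearCombination_congr_of_eqOn fun j hj => hval p p.2 (p.1.isDependentClosed α hp hj)]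
  exact p.1.ne_zero α hp

variable [IsNoetherianRing R] [NoZeroDivisors R] [Infinite R] [WellFoundedLT σ]

theorem exists_le_mem_dom (p : PartialSolution A) (x : β) : ∃ q, p ≤ q ∧ x ∈ q.dom := by
  obtain ⟨B', hB'sub, hB'cl, hB'count⟩ :=
    exists_isDependentClosed_superset p.isDependentClosed (countable_singleton x)
  obtain ⟨c', hc'eq, hc'⟩ :=
    exists_eqOn_linearCombination_ne_zero p.isDependentClosed hB'cl hB'count p.ne_zero
  exact ⟨⟨B', c', hB'cl, hc'⟩, ⟨subset_union_left.trans hB'sub, hc'eq.symm⟩, hB'sub (Or.inr rfl)⟩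

end PartialSolution

theorem exists_linearCombination_ne_zero [IsNoetherianRing R] [NoZeroDivisors R] [Infinite R]
    [WellFoundedLT σ] (A : σ → β →₀ R) (hA : ∀ α, A α ∉ span R (A '' Iio α)) :
    ∃ c : β → R, ∀ α, linearCombination R c (A α) ≠ 0 := by
  have : Nonempty (PartialSolution A) :=
    ⟨⟨∅, 0, by simp [IsDependentClosed, dependents_empty hA], by simp [dependents_empty hA]⟩⟩
  obtain ⟨m, hm⟩ := zorn_le_nonempty fun _ => PartialSolution.bddAbove_of_isChain (A := A)
  have hdom : m.dom = univ := eq_univ_of_forall fun x => by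
    obtain ⟨q, hmq, hx⟩ := m.exists_le_mem_dom x
    exact (hm hmq).1 hx
  refine ⟨m.val, fun α => m.ne_zero α ?_⟩
  simp [hdom, dependents]

end PartialSolution

theorem stmt14_general {R : Type*} [CommRing R] [IsDomain R] [IsNoetherianRing R] [Infinite R]
    {M : Type*} [AddCommGroup M] [Module R M]
    {β : Type*} (b : Module.Basis β R M)
    {σ : Type*} [LinearOrder σ] [WellFoundedLT σ]
    (a : σ → M) (ha : ∀ α, a α ∉ Submodule.span R (a '' Set.Iio α)) :
    ∃ ψ : M →ₗ[R] R, ∀ α, ψ (a α) ≠ 0 := by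
  obtain ⟨c, hc⟩ := exists_linearCombination_ne_zero (fun α => b.repr (a α)) fun α h => ha α <| by
    simpa [map_span, image_image] using mem_map_of_mem (f := b.repr.symm.toLinearMap) h
  exact ⟨linearCombination R c ∘ₗ b.repr.toLinearMap, hc⟩

/-- Lemma 2.3 with `z_α = 0`: over an infinite commutative noetherian domain `R`,
let `M` be a free module of infinite rank with a filtration along a well-order
adding one generator `a α` (not lying in the span of the previous ones) at each
step and exhausting `M`. Then there is `ψ : M →ₗ R` with `ψ (a α) ≠ 0` for all `α`. -/
theorem stmt14 {R : Type*} [CommRing R] [IsDomain R] [IsNoetherianRing R] [Infinite R]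
    {M : Type*} [AddCommGroup M] [Module R M]
    {β : Type*} [Infinite β] (b : Module.Basis β R M)
    {σ : Type*} [LinearOrder σ] [WellFoundedLT σ]
    (a : σ → M) (ha : ∀ α, a α ∉ Submodule.span R (a '' Set.Iio α))
    (hcover : Submodule.span R (Set.range a) = ⊤) :
    ∃ ψ : M →ₗ[R] R, ∀ α, ψ (a α) ≠ 0 :=
  stmt14_general b a ha
end

section
/- Let σ be an ordinal, M an R-module with a filtration (M_α : α ≤ σ) satisfying M_{α+1} = M_α + A_α where A_α = ⟨a_α⟩ is cyclic. Call a subset S ⊆ σ 'closed' if for every α ∈ S, M_α ∩ A_α ⊆ Σ_{β ∈ S, β < α} A_β. Then: (1) arbitrary intersections and unions of 'closed' subsets are 'closed'; (2) for 'closed' subsets S, S′, the submodules M(S) = Σ_{α ∈ S} A_α satisfy S ⊆ S′ if and only if M(S) ⊆ M(S′). -/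
/-- `S ⊆ σ` is 'closed' for the filtration determined by `a : σ → M`
(where `M_α = ⟨a β : β < α⟩` and `A_α = ⟨a α⟩`) if for every `α ∈ S`,
`M_α ∩ A_α ⊆ Σ_{β ∈ S, β < α} A_β`. -/
def IsClosedIdx (R : Type*) {M ι : Type*} [Ring R] [AddCommGroup M] [Module R M]
    [LinearOrder ι] (a : ι → M) (S : Set ι) : Prop :=
  ∀ α ∈ S, Submodule.span R (a '' Set.Iio α) ⊓ Submodule.span R {a α} ≤
    Submodule.span R (a '' {β ∈ S | β < α})

set_option linter.unusedSectionVars false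

section Aux

variable {R M ι : Type*} [Ring R] [AddCommGroup M] [Module R M]
    [LinearOrder ι] [WellFoundedLT ι] (a : ι → M)

private lemma sep_eq (S : Set ι) (α : ι) : {β ∈ S | β < α} = S ∩ Set.Iio α := rfl

private lemma sp_mono {T T' : Set ι} (h : T ⊆ T') :
    Submodule.span R (a '' T) ≤ Submodule.span R (a '' T') :=
  Submodule.span_mono (Set.image_mono h)

/-- finite support extraction -/
private lemma fin_supp {T : Set ι} {x : M} (hx : x ∈ Submodule.span R (a '' T)) :
    ∃ F : Finset ι, ↑F ⊆ T ∧ x ∈ Submodule.span R (a '' (F : Set ι)) := by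
  classical
  obtain ⟨G, hG, hxG⟩ := Submodule.mem_span_finite_of_mem_span hx
  obtain ⟨F, hF, rfl⟩ := Finset.subset_set_image_iff.mp hG
  refine ⟨F, hF, ?_⟩
  rwa [Finset.coe_image] at hxG

private lemma split_insert (T : Set ι) (δ : ι) {x : M}
    (hx : x ∈ Submodule.span R (a '' insert δ T)) :
    ∃ y z, y ∈ Submodule.span R (a '' T) ∧ z ∈ Submodule.span R {a δ} ∧ x = y + z := by
  rw [Set.image_insert_eq, Submodule.span_insert] at hx
  obtain ⟨z, hz, y, hy, rfl⟩ := Submodule.mem_sup.mp hx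
  exact ⟨y, z, hy, hz, (add_comm y z).symm⟩

/-- Master lemma: if `S` is closed, `C` is a lower set, then
`span (a '' S) ⊓ span (a '' C) ≤ span (a '' (S ∩ C))`, in a form suitable for
well-founded induction on the maximum of a finite support. -/
private lemma master_aux {S : Set ι} (hS : IsClosedIdx R a S)
    {C : Set ι} (hC : IsLowerSet C) :
    ∀ (γ : WithBot ι) (F : Finset ι), ↑F ⊆ S → F.max ≤ γ →
      ∀ x, x ∈ Submodule.span R (a '' (F : Set ι)) →
        x ∈ Submodule.span R (a '' C) →
        x ∈ Submodule.span R (a '' (S ∩ C)) := by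
  classical
  intro γ
  induction γ using WellFoundedLT.induction with
  | ind γ IH =>
  intro F hFS hFγ x hxF hxC
  rcases F.eq_empty_or_nonempty with rfl | hne
  · have hx0 : x = 0 := by simpa using hxF
    simp [hx0]
  set δ := F.max' hne with hδ
  have hδF : δ ∈ F := F.max'_mem hne
  have hδS : δ ∈ S := hFS hδF
  by_cases hδC : δ ∈ C
  · -- all of F lies in C
    have hsub : (F : Set ι) ⊆ S ∩ C := fun β hβ => ⟨hFS hβ, hC (F.le_max' β hβ) hδC⟩
    exact sp_mono a (R := R) hsub hxF
  · -- C ⊆ Iio δ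
    have hCδ : C ⊆ Set.Iio δ := fun c hc =>
      not_le.mp (fun hle => hδC (hC hle hc))
    have hxMδ : x ∈ Submodule.span R (a '' Set.Iio δ) := sp_mono a (R := R) hCδ hxC
    -- split x at δ
    have hFins : (F : Set ι) ⊆ insert δ ↑(F.erase δ) := by
      intro β hβ
      rcases eq_or_ne β δ with rfl | hne'
      · exact Set.mem_insert _ _
      · exact Set.mem_insert_of_mem _ (Finset.mem_coe.mpr (Finset.mem_erase.mpr ⟨hne', hβ⟩))
    obtain ⟨y, z, hy, hz, rfl⟩ := split_insert a (↑(F.erase δ)) δ (sp_mono a (R := R) hFins hxF)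
    have herase : (↑(F.erase δ) : Set ι) ⊆ S ∩ Set.Iio δ := by
      intro β hβ
      obtain ⟨hne', hβF⟩ := Finset.mem_erase.mp hβ
      exact ⟨hFS hβF, lt_of_le_of_ne (F.le_max' β hβF) hne'⟩
    have hyMδ : y ∈ Submodule.span R (a '' Set.Iio δ) :=
      sp_mono a (R := R) (fun β hβ => (herase hβ).2) hy
    have hzMδ : z ∈ Submodule.span R (a '' Set.Iio δ) := by
      have hzz : z = y + z - y := by abel
      rw [hzz]; exact Submodule.sub_mem _ hxMδ hyMδ
    have hzred : z ∈ Submodule.span R (a '' (S ∩ Set.Iio δ)) := by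
      have := hS δ hδS ⟨hzMδ, hz⟩
      rwa [sep_eq] at this
    have hx' : y + z ∈ Submodule.span R (a '' (S ∩ Set.Iio δ)) :=
      Submodule.add_mem _ (sp_mono a (R := R) herase hy) hzred
    obtain ⟨F', hF', hxF'⟩ := fin_supp a hx'
    have hmaxlt : F'.max < γ := by
      have hlt : F'.max < (δ : WithBot ι) := by
        rcases F'.eq_empty_or_nonempty with rfl | hne'
        · simp
        · rw [← Finset.coe_max' hne', WithBot.coe_lt_coe]
          exact (hF' (F'.max'_mem hne')).2
      calc F'.max < (δ : WithBot ι) := hlt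
        _ = F.max := Finset.coe_max' hne
        _ ≤ γ := hFγ
    exact IH F'.max hmaxlt F' (fun β hβ => (hF' hβ).1) le_rfl (y + z) hxF' hxC

private lemma master {S : Set ι} (hS : IsClosedIdx R a S)
    {C : Set ι} (hC : IsLowerSet C) {x : M}
    (hx : x ∈ Submodule.span R (a '' S)) (hxC : x ∈ Submodule.span R (a '' C)) :
    x ∈ Submodule.span R (a '' (S ∩ C)) := by
  obtain ⟨F, hF, hxF⟩ := fin_supp a hx
  exact master_aux a hS hC F.max F hF le_rfl x hxF hxC

/-- intersection lemma: if all `S i` are closed and `x` lies in every `span (a '' S i)`,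
then `x ∈ span (a '' ⋂ i, S i)`. -/
private lemma inter_mem {idx : Type*} [Nonempty idx] {S : idx → Set ι}
    (hS : ∀ i, IsClosedIdx R a (S i)) :
    ∀ (γ : WithBot ι) (F : Finset ι), ↑F ⊆ S (Classical.arbitrary idx) → F.max ≤ γ →
      ∀ x, x ∈ Submodule.span R (a '' (F : Set ι)) →
        (∀ i, x ∈ Submodule.span R (a '' S i)) →
        x ∈ Submodule.span R (a '' ⋂ i, S i) := by
  classical
  set i₀ := Classical.arbitrary idx
  intro γ
  induction γ using WellFoundedLT.induction with
  | ind γ IH =>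
  intro F hFS hFγ x hxF hxall
  rcases F.eq_empty_or_nonempty with rfl | hne
  · have hx0 : x = 0 := by simpa using hxF
    simp [hx0]
  set δ := F.max' hne with hδ
  have hδF : δ ∈ F := F.max'_mem hne
  have hFIic : (F : Set ι) ⊆ Set.Iic δ := fun β hβ => F.le_max' β hβ
  have hxIic : x ∈ Submodule.span R (a '' Set.Iic δ) := sp_mono a (R := R) hFIic hxF
  have hIic : ∀ i, x ∈ Submodule.span R (a '' (S i ∩ Set.Iic δ)) := fun i =>
    master a (hS i) (isLowerSet_Iic δ) (hxall i) hxIic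
  by_cases hall : ∀ i, δ ∈ S i
  · -- split x at δ using i₀
    have hins : S i₀ ∩ Set.Iic δ ⊆ insert δ (S i₀ ∩ Set.Iio δ) := by
      intro β hβ
      rcases eq_or_ne β δ with rfl | hne'
      · exact Set.mem_insert _ _
      · exact Set.mem_insert_of_mem _ ⟨hβ.1, lt_of_le_of_ne hβ.2 hne'⟩
    obtain ⟨y, z, hy, hz, rfl⟩ :=
      split_insert a (S i₀ ∩ Set.Iio δ) δ (sp_mono a (R := R) hins (hIic i₀))
    have hyMδ : y ∈ Submodule.span R (a '' Set.Iio δ) :=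
      sp_mono a (R := R) (fun β hβ => hβ.2) hy
    -- y lies in every span (a '' S i)
    have hyall : ∀ i, y ∈ Submodule.span R (a '' S i) := by
      intro i
      have hins' : S i ∩ Set.Iic δ ⊆ insert δ (S i ∩ Set.Iio δ) := by
        intro β hβ
        rcases eq_or_ne β δ with rfl | hne'
        · exact Set.mem_insert _ _
        · exact Set.mem_insert_of_mem _ ⟨hβ.1, lt_of_le_of_ne hβ.2 hne'⟩
      obtain ⟨yi, zi, hyi, hzi, heq⟩ :=
        split_insert a (S i ∩ Set.Iio δ) δ (sp_mono a (R := R) hins' (hIic i))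
      have hyiMδ : yi ∈ Submodule.span R (a '' Set.Iio δ) :=
        sp_mono a (R := R) (fun β hβ => hβ.2) hyi
      have hdiffA : zi - z ∈ Submodule.span R {a δ} := Submodule.sub_mem _ hzi hz
      have hzz : zi - z = y - yi := by
        have h1 : zi - z = (yi + zi) - (yi + z) := by abel
        rw [h1, ← heq]; abel
      have hdiffM : zi - z ∈ Submodule.span R (a '' Set.Iio δ) := by
        rw [hzz]; exact Submodule.sub_mem _ hyMδ hyiMδ
      have hred : zi - z ∈ Submodule.span R (a '' (S i ∩ Set.Iio δ)) := by
        have := hS i δ (hall i) ⟨hdiffM, hdiffA⟩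
        rwa [sep_eq] at this
      have hy' : y = yi + (zi - z) := by rw [hzz]; abel
      rw [hy']
      exact Submodule.span_mono (Set.image_mono (Set.inter_subset_left))
        (Submodule.add_mem _ hyi hred)
    obtain ⟨F', hF', hyF'⟩ := fin_supp a hy
    have hmaxlt : F'.max < γ := by
      have hlt : F'.max < (δ : WithBot ι) := by
        rcases F'.eq_empty_or_nonempty with rfl | hne'
        · simp
        · rw [← Finset.coe_max' hne', WithBot.coe_lt_coe]
          exact (hF' (F'.max'_mem hne')).2
      calc F'.max < (δ : WithBot ι) := hlt
        _ = F.max := Finset.coe_max' hne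
        _ ≤ γ := hFγ
    have hyInter : y ∈ Submodule.span R (a '' ⋂ i, S i) :=
      IH F'.max hmaxlt F' (fun β hβ => (hF' hβ).1) le_rfl y hyF' hyall
    have hzInter : z ∈ Submodule.span R (a '' ⋂ i, S i) := by
      refine Submodule.span_le.mpr ?_ hz
      rintro _ rfl
      exact Submodule.subset_span ⟨δ, Set.mem_iInter.mpr hall, rfl⟩
    exact Submodule.add_mem _ hyInter hzInter
  · -- some S j misses δ, so x ∈ M_δ
    push_neg at hall
    obtain ⟨j, hj⟩ := hall
    have hxMδ : x ∈ Submodule.span R (a '' Set.Iio δ) := by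
      have hsub : S j ∩ Set.Iic δ ⊆ Set.Iio δ := by
        intro β hβ
        exact lt_of_le_of_ne hβ.2 (fun h => hj (h ▸ hβ.1))
      exact sp_mono a (R := R) hsub (hIic j)
    have hxall' : ∀ i, x ∈ Submodule.span R (a '' (S i ∩ Set.Iio δ)) := fun i =>
      master a (hS i) (isLowerSet_Iio δ) (hxall i) hxMδ
    obtain ⟨F', hF', hxF'⟩ := fin_supp a (hxall' i₀)
    have hmaxlt : F'.max < γ := by
      have hlt : F'.max < (δ : WithBot ι) := by
        rcases F'.eq_empty_or_nonempty with rfl | hne'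
        · simp
        · rw [← Finset.coe_max' hne', WithBot.coe_lt_coe]
          exact (hF' (F'.max'_mem hne')).2
      calc F'.max < (δ : WithBot ι) := hlt
        _ = F.max := Finset.coe_max' hne
        _ ≤ γ := hFγ
    exact IH F'.max hmaxlt F' (fun β hβ => (hF' hβ).1) le_rfl x hxF' hxall

end Aux

/-- Closure properties of 'closed' subsets (Göbel–Trlifaj): (1) arbitrary
intersections and unions of 'closed' sets are 'closed'; (2) for 'closed' `S, S'`,
`S ⊆ S'` iff `M(S) ⊆ M(S')`, where `M(S) = Σ_{α ∈ S} A_α = ⟨a α : α ∈ S⟩`. -/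
theorem stmt15 {R M ι : Type*} [Ring R] [AddCommGroup M] [Module R M]
    [LinearOrder ι] [WellFoundedLT ι]
    (a : ι → M) (ha : ∀ α, a α ∉ Submodule.span R (a '' Set.Iio α)) :
    (∀ (idx : Type*) (S : idx → Set ι), (∀ i, IsClosedIdx R a (S i)) →
      IsClosedIdx R a (⋂ i, S i) ∧ IsClosedIdx R a (⋃ i, S i)) ∧
    (∀ S S' : Set ι, IsClosedIdx R a S → IsClosedIdx R a S' →
      (S ⊆ S' ↔ Submodule.span R (a '' S) ≤ Submodule.span R (a '' S'))) := by
  constructor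
  · intro idx S hS
    constructor
    · -- intersections
      rcases isEmpty_or_nonempty idx with hidx | hidx
      · intro α hα x hx
        have : {β ∈ (⋂ i, S i) | β < α} = Set.Iio α := by
          ext β
          simp only [Set.mem_sep_iff, Set.mem_iInter, Set.mem_Iio]
          exact ⟨fun h => h.2, fun h => ⟨fun i => hidx.elim i, h⟩⟩
        rw [this]
        exact hx.1
      · intro α hα x hx
        have hα' : ∀ i, α ∈ S i := Set.mem_iInter.mp hα
        -- x lies in each span (a '' (S i ∩ Iio α))
        have hxi : ∀ i, x ∈ Submodule.span R (a '' (S i ∩ Set.Iio α)) := fun i => by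
          have := hS i α (hα' i) hx
          rwa [sep_eq] at this
        -- the sets S i ∩ Iio α are closed
        have hclosed : ∀ i, IsClosedIdx R a (S i ∩ Set.Iio α) := by
          intro i β hβ
          refine le_trans (hS i β hβ.1) (sp_mono a (R := R) ?_)
          intro γ hγ
          exact ⟨⟨hγ.1, lt_trans hγ.2 hβ.2⟩, hγ.2⟩
        have hx0 : x ∈ Submodule.span R (a '' ⋂ i, (S i ∩ Set.Iio α)) := by
          obtain ⟨F, hF, hxF⟩ := fin_supp a (hxi (Classical.arbitrary idx))
          exact inter_mem a hclosed F.max F hF le_rfl x hxF hxi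
        have : (⋂ i, (S i ∩ Set.Iio α)) = {β ∈ (⋂ i, S i) | β < α} := by
          ext β
          simp only [Set.mem_iInter, Set.mem_inter_iff, Set.mem_sep_iff, Set.mem_Iio]
          exact ⟨fun h => ⟨fun i => (h i).1, (h (Classical.arbitrary idx)).2⟩,
            fun h i => ⟨h.1 i, h.2⟩⟩
        rwa [this] at hx0
    · -- unions
      intro α hα x hx
      obtain ⟨_, ⟨i, rfl⟩, hαi⟩ := hα
      refine le_trans (hS i α hαi) (sp_mono a (R := R) ?_) hx
      intro β hβ
      exact ⟨Set.mem_iUnion.mpr ⟨i, hβ.1⟩, hβ.2⟩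
  · intro S S' hSc hS'c
    constructor
    · intro h
      exact sp_mono a (R := R) h
    · intro h α hα
      have hx : a α ∈ Submodule.span R (a '' S') :=
        h (Submodule.subset_span ⟨α, hα, rfl⟩)
      have hxIic : a α ∈ Submodule.span R (a '' Set.Iic α) :=
        Submodule.subset_span ⟨α, le_refl α, rfl⟩
      have hmem : a α ∈ Submodule.span R (a '' (S' ∩ Set.Iic α)) :=
        master a hS'c (isLowerSet_Iic α) hx hxIic
      by_contra hαS'
      have hsub : S' ∩ Set.Iic α ⊆ Set.Iio α := fun β hβ =>
        lt_of_le_of_ne hβ.2 (fun hc => hαS' (hc ▸ hβ.1))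
      exact ha α (sp_mono a (R := R) hsub hmem)
end

section
/- Suppose κ is an uncountable cardinal that is not L_{ω₁ω}-compact (no κ-complete filter extension property). Then κ ∉ WS: there exists a nonempty system S of homogeneous ℤ-linear equations such that every nonempty subsystem of cardinality < κ has a weakly nontrivial solution in ℤ, but S has none. -/
/-!
Let `F` be a `κ`-complete filter on `I` with no countably complete ultrafilter extension, and let
`A = ℤ^I / F` be the group of germs. The system consists of the equations
`x a + x b = x (a + b)` for `a`, `b`, `a + b` nonzero in `A`. Fewer than `κ` of these equations hold
simultaneously, for chosen representatives, on a set in `F`, so evaluating the representatives at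
a suitable coordinate solves them. A solution of the whole system would be a nonzero homomorphism
`A → ℤ`, that is, a nonzero homomorphism `φ : ℤ^I → ℤ` that kills the `F`-null functions.
Specker's theorems on `Hom(ℤ^ℕ, ℤ)` show that the sets which are hereditarily null for `φ` form a
σ-ideal with an atom, and the sets that contain the atom up to a null set form a countably complete
ultrafilter extending `F`.
-/

universe u

def speckerWeight (a : ℕ → ℤ) : ℕ → ℤ
  | 0 => 1
  | n + 1 => 2 * speckerWeight a n * a n

theorem speckerWeight_ne_zero {a : ℕ → ℤ} (ha : ∀ n, a n ≠ 0) (n : ℕ) : speckerWeight a n ≠ 0 := by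
  induction n with
  | zero => exact one_ne_zero
  | succ n ih => exact mul_ne_zero (mul_ne_zero two_ne_zero ih) (ha n)

theorem dvd_speckerWeight (a : ℕ → ℤ) {m n : ℕ} (h : m < n) :
    2 * speckerWeight a m * a m ∣ speckerWeight a n := by
  induction n, h using Nat.le_induction with
  | base => rfl
  | succ n _ ih => exact ih.trans ⟨2 * a n, by rw [speckerWeight]; ring⟩

namespace AddMonoidHom

section Specker

variable (ψ : (ℕ → ℤ) →+ ℤ)

theorem map_eq_zero_of_eventually_eq_zero (hψ : ∀ n, ψ (Pi.single n 1) = 0) {x : ℕ → ℤ} {N : ℕ}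
    (hx : ∀ n, N ≤ n → x n = 0) : ψ x = 0 := by
  induction N generalizing x with
  | zero => simp [show x = 0 from funext fun n => hx n n.zero_le]
  | succ N ih =>
    have hsplit : x = (x - Pi.single N (x N)) + x N • Pi.single N 1 := by
      rw [← Pi.single_smul', smul_eq_mul, mul_one, sub_add_cancel]
    rw [hsplit, map_add, map_zsmul, hψ, smul_zero, add_zero]
    refine ih fun n hn => ?_
    rcases hn.eq_or_lt with rfl | hlt
    · simp
    · simp [hx n hlt, hlt.ne']

theorem pow_dvd_map_of_pow_dvd (hψ : ∀ n, ψ (Pi.single n 1) = 0) {p : ℤ} {x : ℕ → ℤ}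
    (hx : ∀ n, p ^ n ∣ x n) (N : ℕ) : p ^ N ∣ ψ x := by
  set y : ℕ → ℤ := fun n => if N ≤ n then x n / p ^ N else 0
  have htail : ψ (x - p ^ N • y) = 0 := by
    refine map_eq_zero_of_eventually_eq_zero ψ hψ (N := N) fun n hn => ?_
    simp only [y, Pi.sub_apply, Pi.smul_apply, smul_eq_mul, if_pos hn,
      Int.mul_ediv_cancel' ((pow_dvd_pow p hn).trans (hx n)), sub_self]
  rw [map_sub, map_zsmul, sub_eq_zero] at htail
  exact htail ▸ dvd_mul_right _ _

theorem map_eq_zero_of_pow_dvd (hψ : ∀ n, ψ (Pi.single n 1) = 0) {p : ℕ} (hp : 1 < p)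
    {x : ℕ → ℤ} (hx : ∀ n, (p : ℤ) ^ n ∣ x n) : ψ x = 0 :=
  Int.eq_zero_of_dvd_of_natAbs_lt_natAbs (pow_dvd_map_of_pow_dvd ψ hψ hx (ψ x).natAbs)
    (by simpa [Int.natAbs_pow] using Nat.lt_pow_self hp)

theorem eq_zero_of_map_single_eq_zero (hψ : ∀ n, ψ (Pi.single n 1) = 0) : ψ = 0 := by
  have hcop (n : ℕ) : IsCoprime ((2 : ℤ) ^ n) (3 ^ n) :=
    (Int.isCoprime_iff_gcd_eq_one.mpr rfl).pow
  choose u v huv using hcop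
  ext x
  have hx : x = (fun n => 2 ^ n * (u n * x n)) + fun n => 3 ^ n * (v n * x n) := by
    funext n
    simp only [Pi.add_apply]
    linear_combination (-x n) * huv n
  rw [zero_apply, hx, map_add,
    map_eq_zero_of_pow_dvd ψ hψ one_lt_two (fun n => by exact_mod_cast dvd_mul_right _ _),
    map_eq_zero_of_pow_dvd ψ hψ (by norm_num : 1 < 3)
      (fun n => by exact_mod_cast dvd_mul_right _ _),
    add_zero]

theorem map_mul_speckerWeight_ne_zero (hψ : ∀ n, ψ (Pi.single n 1) ≠ 0) {d : ℕ → ℤ} {n₀ : ℕ}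
    (hd : ∀ n < n₀, d n = 0) (hodd : Odd (d n₀)) :
    ψ (fun n => d n * speckerWeight (fun n => ψ (Pi.single n 1)) n) ≠ 0 := by
  set a : ℕ → ℤ := fun n => ψ (Pi.single n 1)
  set c := speckerWeight a
  set M := 2 * c n₀ * a n₀
  set y : ℕ → ℤ := fun n => if n₀ < n then d n * c n / M else 0
  have hsplit : (fun n => d n * c n) = (d n₀ * c n₀) • Pi.single n₀ 1 + M • y := by
    funext n
    simp only [Pi.add_apply, Pi.smul_apply, smul_eq_mul, y]
    rcases lt_trichotomy n n₀ with h | rfl | h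
    · simp [hd n h, h.ne, h.not_gt]
    · simp
    · rw [Pi.single_eq_of_ne h.ne', if_pos h,
        Int.mul_ediv_cancel' (dvd_mul_of_dvd_right (dvd_speckerWeight a h) _)]
      ring
  -- an odd multiple of the nonzero integer `c n₀ * a n₀`
  have hval : ψ (fun n => d n * c n) = c n₀ * a n₀ * (d n₀ + 2 * ψ y) := by
    rw [hsplit, map_add, map_zsmul, map_zsmul, smul_eq_mul, smul_eq_mul]
    ring
  obtain ⟨k, hk⟩ := hodd
  rw [hval]
  exact mul_ne_zero (mul_ne_zero (speckerWeight_ne_zero hψ n₀) (hψ n₀)) (by omega)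

/-- Otherwise `δ ↦ ψ (δ * c)`, with `c` the Specker weights, would inject the uncountable set
`{0,1}^ℕ` into `ℤ`. -/
theorem exists_map_single_eq_zero : ∃ n, ψ (Pi.single n 1) = 0 := by
  by_contra! hψ
  have : Uncountable (ℕ → Bool) :=
    Cardinal.aleph0_lt_mk_iff.mp (by simpa using Cardinal.cantor Cardinal.aleph0)
  set c := speckerWeight fun n => ψ (Pi.single n 1)
  refine not_injective_uncountable_countable (fun δ : ℕ → Bool => ψ fun n => (δ n).toNat * c n)
    fun δ δ' h => ?_
  by_contra hne
  have hex : ∃ n, δ n ≠ δ' n := Function.ne_iff.mp hne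
  refine map_mul_speckerWeight_ne_zero ψ hψ (d := fun n => (δ n).toNat - (δ' n).toNat)
    (n₀ := Nat.find hex) (fun n hn => ?_) ?_ ?_
  · simp [not_not.mp (Nat.find_min hex hn)]
  · have := Nat.find_spec hex
    revert this
    cases δ (Nat.find hex) <;> cases δ' (Nat.find hex) <;> simp
  · rw [← sub_eq_zero, ← map_sub] at h
    convert h using 2
    exact funext fun n => sub_mul _ _ _

end Specker

end AddMonoidHom

open Set Function

section NullSets

variable {I : Type*}

open Classical in
/-- For pairwise disjoint `D`, this is `c ↦ ∑ n, c n • (D n).indicator g`. -/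
noncomputable def sumIndicatorHom (D : ℕ → Set I) (g : I → ℤ) : (ℕ → ℤ) →+ (I → ℤ) :=
  AddMonoidHom.mk' (fun c i => if h : ∃ n, i ∈ D n then c (Nat.find h) * g i else 0) fun c d => by
    funext i
    by_cases h : ∃ n, i ∈ D n <;> simp [h, add_mul]

theorem sumIndicatorHom_single {D : ℕ → Set I} (hD : Pairwise (Disjoint on D)) (g : I → ℤ)
    (n : ℕ) : sumIndicatorHom D g (Pi.single n 1) = (D n).indicator g := by
  classical
  funext i
  by_cases hi : i ∈ D n
  · have hfind : Nat.find (⟨n, hi⟩ : ∃ m, i ∈ D m) = n := by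
      by_contra hne
      exact Set.disjoint_left.mp (hD hne) (Nat.find_spec (⟨n, hi⟩ : ∃ m, i ∈ D m)) hi
    simp [sumIndicatorHom, hi, dif_pos (⟨n, hi⟩ : ∃ m, i ∈ D m), hfind]
  · have hfind (h : ∃ m, i ∈ D m) : Nat.find h ≠ n := fun he => hi (he ▸ Nat.find_spec h)
    by_cases h : ∃ m, i ∈ D m <;> simp [sumIndicatorHom, hi, h, hfind]

theorem sumIndicatorHom_one (D : ℕ → Set I) (g : I → ℤ) :
    sumIndicatorHom D g 1 = (⋃ n, D n).indicator g := by
  funext i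
  by_cases h : ∃ n, i ∈ D n <;> simp [sumIndicatorHom, h]

namespace AddMonoidHom

variable (φ : (I → ℤ) →+ ℤ) (g : I → ℤ)

/-- Hereditarily null sets of the finitely additive measure `B ↦ φ (B.indicator g)`. -/
def IsNullSet (A : Set I) : Prop :=
  ∀ B ⊆ A, φ (B.indicator g) = 0

variable {φ g}

theorem IsNullSet.mono {A A' : Set I} (h : IsNullSet φ g A) (hA' : A' ⊆ A) : IsNullSet φ g A' :=
  fun B hB => h B (hB.trans hA')

theorem isNullSet_empty : IsNullSet φ g ∅ := fun B hB => by
  rw [subset_empty_iff.mp hB, indicator_empty', map_zero]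

theorem isNullSet_iUnion {C : ℕ → Set I} (hC : ∀ n, IsNullSet φ g (C n)) :
    IsNullSet φ g (⋃ n, C n) := by
  intro B hB
  set D := disjointed fun n => B ∩ C n
  have hDB : ⋃ n, D n = B := by
    rw [iUnion_disjointed, ← inter_iUnion, inter_eq_left.mpr hB]
  have hψ : φ.comp (sumIndicatorHom D g) = 0 :=
    eq_zero_of_map_single_eq_zero _ fun n => by
      rw [comp_apply, sumIndicatorHom_single (disjoint_disjointed _)]
      exact hC n _ ((disjointed_subset _ n).trans inter_subset_right)
  simpa [sumIndicatorHom_one, hDB] using DFunLike.congr_fun hψ 1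

theorem isNullSet_sUnion {S : Set (Set I)} (hS : S.Countable) (h : ∀ s ∈ S, IsNullSet φ g s) :
    IsNullSet φ g (⋃₀ S) := by
  rcases S.eq_empty_or_nonempty with rfl | hne
  · simpa using isNullSet_empty
  obtain ⟨C, rfl⟩ := hS.exists_eq_range hne
  rw [sUnion_range]
  exact isNullSet_iUnion fun n => h _ (mem_range_self n)

theorem IsNullSet.union {A A' : Set I} (h : IsNullSet φ g A) (h' : IsNullSet φ g A') :
    IsNullSet φ g (A ∪ A') := by
  rw [← sUnion_pair]
  exact isNullSet_sUnion (countable_singleton A' |>.insert A) (by simp [h, h'])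

theorem exists_atom (huniv : ¬ IsNullSet φ g univ) :
    ∃ A, ¬ IsNullSet φ g A ∧ ∀ B, IsNullSet φ g (A ∩ B) ∨ IsNullSet φ g (A \ B) := by
  by_contra! hsplit
  choose! B hB hB' using hsplit
  set A : ℕ → Set I := fun n => (fun A => A ∩ B A)^[n] univ
  have hAsucc (n : ℕ) : A (n + 1) = A n ∩ B (A n) := iterate_succ_apply' _ _ _
  have hA (n : ℕ) : ¬ IsNullSet φ g (A n) := by
    induction n with
    | zero => exact huniv
    | succ n ih => exact hAsucc n ▸ hB _ ih
  have hanti : Antitone A := antitone_nat_of_succ_le fun n => hAsucc n ▸ inter_subset_left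
  have hE (n : ℕ) : ∃ E ⊆ A n \ A (n + 1), φ (E.indicator g) ≠ 0 := by
    simpa [IsNullSet, hAsucc] using hB' _ (hA n)
  choose E hEA hE using hE
  have hdisj : Pairwise (Disjoint on E) := by
    refine (pairwise_disjoint_on E).mpr fun m n hmn => disjoint_left.mpr fun i hm hn => ?_
    exact (hEA m hm).2 (hanti hmn (hEA n hn).1)
  obtain ⟨n, hn⟩ := exists_map_single_eq_zero (φ.comp (sumIndicatorHom E g))
  rw [comp_apply, sumIndicatorHom_single hdisj] at hn
  exact hE n hn

theorem exists_ultrafilter_le_countableInterFilter {F : Filter I} (φ : (I → ℤ) →+ ℤ)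
    (hφF : ∀ g : I → ℤ, g =ᶠ[F] 0 → φ g = 0) (hφ : φ ≠ 0) :
    ∃ U : Ultrafilter I, ↑U ≤ F ∧ CountableInterFilter (U : Filter I) := by
  obtain ⟨g, hg⟩ := DFunLike.ne_iff.mp hφ
  have huniv : ¬ IsNullSet φ g univ := fun h => hg (by simpa using h univ subset_rfl)
  obtain ⟨A, hA, hsplit⟩ := exists_atom huniv
  let G := Filter.ofCountableUnion {s | IsNullSet φ g (A ∩ s)}
    (fun S hS h => (isNullSet_sUnion (hS.image (A ∩ ·)) (by simpa using h)).mono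
      (by rintro i ⟨hiA, t, ht, hit⟩; exact ⟨_, ⟨t, ht, rfl⟩, hiA, hit⟩))
    (fun t ht s hst => ht.mono (inter_subset_inter_right _ hst))
  have hG (s : Set I) : sᶜ ∉ G ↔ s ∈ G := by
    simp only [G, Filter.mem_ofCountableUnion, mem_ofPred_eq, compl_compl]
    exact ⟨fun h => ((hsplit s).resolve_left h).mono fun i hi => hi,
      fun h h' => hA ((h'.union h).mono (inter_union_compl A s).ge)⟩
  refine ⟨.ofComplNotMemIff G hG, fun t ht => ?_, inferInstanceAs (CountableInterFilter G)⟩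
  show IsNullSet φ g (A ∩ tᶜ)
  intro B hB
  exact hφF _ (by
    filter_upwards [ht] with i hi using indicator_of_notMem (fun hiB => (hB hiB).2 hi) _)

end AddMonoidHom

end NullSets

namespace AddMonoidHom

theorem exists_eq_of_map_add_of_ne_zero {A B : Type*} [AddCommGroup A] [AddCommGroup B]
    (hA : ∀ a : A, a + a = 0 → a = 0) (f : A → B)
    (hf : ∀ a b, a ≠ 0 → b ≠ 0 → a + b ≠ 0 → f (a + b) = f a + f b) :
    ∃ ψ : A →+ B, ∀ a, a ≠ 0 → ψ a = f a := by
  classical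
  have hneg (a : A) (ha : a ≠ 0) : f a + f (-a) = 0 := by
    have h2a : a + a ≠ 0 := fun h => ha (hA a h)
    have h1 := hf a a ha ha h2a
    have h2 := hf (a + a) (-a) h2a (neg_ne_zero.mpr ha) (by rwa [add_neg_cancel_right])
    rw [add_neg_cancel_right, h1, add_assoc] at h2
    exact add_eq_left.mp h2.symm
  refine ⟨AddMonoidHom.mk' (fun a => if a = 0 then 0 else f a) fun a b => ?_,
    fun a ha => if_neg ha⟩
  by_cases ha : a = 0
  · simp [ha]
  by_cases hb : b = 0
  · simp [hb]
  by_cases hab : a + b = 0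
  · rw [eq_neg_of_add_eq_zero_right hab] at hb ⊢
    simp [ha, hneg a ha]
  · simp [ha, hb, hab, hf a b ha hb hab]

end AddMonoidHom

abbrev AdditivityIndex (A : Type*) [AddCommGroup A] : Type _ :=
  {p : A × A // p.1 ≠ 0 ∧ p.2 ≠ 0 ∧ p.1 + p.2 ≠ 0}

noncomputable def additivitySystem (A : Type*) [AddCommGroup A] (j : AdditivityIndex A) : A →₀ ℤ :=
  Finsupp.single j.1.1 1 + Finsupp.single j.1.2 1 - Finsupp.single (j.1.1 + j.1.2) 1

namespace additivitySystem

variable {A : Type*} [AddCommGroup A] (j : AdditivityIndex A)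

theorem sum_mul (f : A → ℤ) :
    ((additivitySystem A j).sum fun x c => c * f x) = f j.1.1 + f j.1.2 - f (j.1.1 + j.1.2) := by
  simp [additivitySystem, Finsupp.sum_sub_index, Finsupp.sum_add_index', sub_mul, add_mul]

theorem apply_zero : additivitySystem A j 0 = 0 := by
  simp [additivitySystem, j.2.1.symm, j.2.2.1.symm, j.2.2.2.symm]

theorem apply_fst_ne_zero : additivitySystem A j j.1.1 ≠ 0 := by
  have : j.1.1 + j.1.2 ≠ j.1.1 := fun h => j.2.2.1 (add_eq_left.mp h)
  rw [additivitySystem, Finsupp.sub_apply, Finsupp.single_eq_of_ne this.symm, sub_zero]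
  by_cases h : j.1.2 = j.1.1 <;> simp [h]

end additivitySystem

namespace Filter.Germ

variable {I : Type u} {l : Filter I}

theorem eq_zero_of_add_self_eq_zero {a : l.Germ ℤ} (h : a + a = 0) : a = 0 := by
  induction a using Filter.Germ.inductionOn with | _ f => ?_
  rw [← coe_add, ← coe_zero, coe_eq] at h
  exact coe_eq.mpr (h.mono fun i hi => by simp only [Pi.add_apply, Pi.zero_apply] at hi ⊢; omega)

theorem exists_ultrafilter_le_countableInterFilter (ψ : l.Germ ℤ →+ ℤ) (hψ : ψ ≠ 0) :
    ∃ U : Ultrafilter I, ↑U ≤ l ∧ CountableInterFilter (U : Filter I) := by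
  refine (ψ.comp (coeAddHom l)).exists_ultrafilter_le_countableInterFilter
    (fun g hg => by simp [coe_eq.mpr hg]) fun h => hψ ?_
  ext a
  induction a using Filter.Germ.inductionOn with | _ f => exact DFunLike.congr_fun h f

theorem exists_solution_of_card_lt {κ : Cardinal.{u}}
    (hcomp : ∀ s : Set (Set I), Cardinal.mk s < κ → (∀ t ∈ s, t ∈ l) → ⋂₀ s ∈ l)
    {T : Set (AdditivityIndex (l.Germ ℤ))} (hT : Cardinal.mk T < κ) {a₀ : l.Germ ℤ} (ha₀ : a₀ ≠ 0) :
    ∃ f : l.Germ ℤ → ℤ, (∀ j ∈ T, f (j.1.1 + j.1.2) = f j.1.1 + f j.1.2) ∧ f a₀ ≠ 0 := by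
  have hrep (a : l.Germ ℤ) : ∃ f : I → ℤ, (f : l.Germ ℤ) = a := a.inductionOn fun f => ⟨f, rfl⟩
  choose r hr using hrep
  let s (j : AdditivityIndex (l.Germ ℤ)) : Set I :=
    {i | r (j.1.1 + j.1.2) i = r j.1.1 i + r j.1.2 i}
  have hs (j) : s j ∈ l :=
    coe_eq.mp (show (r (j.1.1 + j.1.2) : l.Germ ℤ) = ↑(r j.1.1 + r j.1.2) by
      rw [coe_add, hr, hr, hr])
  have hmem : ⋂₀ (s '' T) ∈ l :=
    hcomp _ (Cardinal.mk_image_le.trans_lt hT) (by rintro _ ⟨j, -, rfl⟩; exact hs j)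
  obtain ⟨i, hi, hi₀⟩ : ∃ i ∈ ⋂₀ (s '' T), r a₀ i ≠ 0 := by
    by_contra! h
    exact ha₀ (hr a₀ ▸ coe_eq.mpr (mem_of_superset hmem h))
  exact ⟨fun a => r a i, fun j hj => hi _ ⟨j, hj, rfl⟩, hi₀⟩

end Filter.Germ

theorem stmt16_general {κ : Cardinal.{u}}
    (hnc : ¬ ∀ (I : Type u) (F : Filter I), F.NeBot →
      (∀ s : Set (Set I), Cardinal.mk s < κ → (∀ t ∈ s, t ∈ F) → ⋂₀ s ∈ F) →
      ∃ U : Ultrafilter I, (∀ t ∈ F, t ∈ U) ∧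
        ∀ s : Set (Set I), s.Countable → (∀ t ∈ s, t ∈ U) → ⋂₀ s ∈ U) :
    ∃ (J X : Type u) (k : J → (X →₀ ℤ)), Nonempty J ∧
      (∀ T : Set J, T.Nonempty → Cardinal.mk T < κ →
        ∃ f : X → ℤ, (∀ j ∈ T, ((k j).sum fun x a => a * f x) = 0) ∧
          ∃ x, (∃ j ∈ T, k j x ≠ 0) ∧ f x ≠ 0) ∧
      ¬ ∃ f : X → ℤ, (∀ j, ((k j).sum fun x a => a * f x) = 0) ∧
          ∃ x, (∃ j, k j x ≠ 0) ∧ f x ≠ 0 := by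
  push Not at hnc
  obtain ⟨I, F, hF, hcomp, hext⟩ := hnc
  have h2 : (1 + 1 : F.Germ ℤ) ≠ 0 :=
    fun h => one_ne_zero (Filter.Germ.eq_zero_of_add_self_eq_zero h)
  refine ⟨AdditivityIndex (F.Germ ℤ), F.Germ ℤ, additivitySystem _,
    ⟨⟨(1, 1), one_ne_zero, one_ne_zero, h2⟩⟩, ?_, ?_⟩
  · rintro T ⟨j₀, hj₀⟩ hT
    obtain ⟨f, hf, hf₀⟩ := Filter.Germ.exists_solution_of_card_lt hcomp hT j₀.2.1
    exact ⟨f, fun j hj => by rw [additivitySystem.sum_mul, hf j hj, sub_self], j₀.1.1,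
      ⟨j₀, hj₀, additivitySystem.apply_fst_ne_zero j₀⟩, hf₀⟩
  · rintro ⟨f, hf, x, ⟨j, hjx⟩, hfx⟩
    have hx : x ≠ 0 := by rintro rfl; exact hjx (additivitySystem.apply_zero j)
    obtain ⟨ψ, hψ⟩ := AddMonoidHom.exists_eq_of_map_add_of_ne_zero
      (fun a => Filter.Germ.eq_zero_of_add_self_eq_zero) f fun a b ha hb hab => by
        simpa [additivitySystem.sum_mul, sub_eq_zero, eq_comm] using hf ⟨(a, b), ha, hb, hab⟩
    have hψ0 : ψ ≠ 0 := fun h => hfx (by rw [← hψ x hx, h, AddMonoidHom.zero_apply])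
    obtain ⟨U, hFU, hU⟩ := Filter.Germ.exists_ultrafilter_le_countableInterFilter ψ hψ0
    obtain ⟨s, hs, hsU, hsU'⟩ := hext U fun t ht => hFU ht
    exact hsU' ((countable_sInter_mem hs).mpr hsU)

/-- If the uncountable cardinal `κ` is not `L_{ω₁ω}`-compact (some proper
`κ`-complete filter admits no countably complete ultrafilter extension), then
`κ ∉ 𝒲𝒮`: there is a nonempty system of homogeneous `ℤ`-linear equations each of
whose nonempty subsystems of cardinality `< κ` has a weakly nontrivial solution in
`ℤ`, while the whole system has none. -/
theorem stmt16 {κ : Cardinal.{u}} (hκ : Cardinal.aleph0 < κ)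
    (hnc : ¬ ∀ (I : Type u) (F : Filter I), F.NeBot →
      (∀ s : Set (Set I), Cardinal.mk s < κ → (∀ t ∈ s, t ∈ F) → ⋂₀ s ∈ F) →
      ∃ U : Ultrafilter I, (∀ t ∈ F, t ∈ U) ∧
        ∀ s : Set (Set I), s.Countable → (∀ t ∈ s, t ∈ U) → ⋂₀ s ∈ U) :
    ∃ (J X : Type u) (k : J → (X →₀ ℤ)), Nonempty J ∧
      (∀ T : Set J, T.Nonempty → Cardinal.mk T < κ →
        ∃ f : X → ℤ, (∀ j ∈ T, ((k j).sum fun x a => a * f x) = 0) ∧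
          ∃ x, (∃ j ∈ T, k j x ≠ 0) ∧ f x ≠ 0) ∧
      ¬ ∃ f : X → ℤ, (∀ j, ((k j).sum fun x a => a * f x) = 0) ∧
          ∃ x, (∃ j, k j x ≠ 0) ∧ f x ≠ 0 :=
  stmt16_general hnc
end

section
/- For an uncountable cardinal κ, if there exists a regular cardinal λ ≤ κ such that every abelian group A with Hom(A, ℤ) = 0 is the sum of its subgroups of cardinality < λ that themselves have trivial dual, then: for any nonempty system S of homogeneous ℤ-linear equations with no weakly nontrivial solution in ℤ, and any subsystem C ⊆ S of cardinality < κ, there exists a subsystem T with C ⊆ T ⊆ S, |T| < κ, such that T has no weakly nontrivial solution in ℤ. -/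
universe u

/-!
Let `F` be free on the variables and `A = F/K`, where `K` is generated by the equations (and by the
variables occurring in none of them). Homomorphisms `A → ℤ` are the solutions vanishing on those
idle variables, so the absence of weakly nontrivial solutions says that `A` has trivial dual, and
by hypothesis every element of `A` lies in a finite sum of trivial-dual subgroups of size `< l`.
Fix a regular `μ` with `l ≤ μ ≤ κ` and `|C| < μ`, and close a set `Y` of fewer than `μ` variables
off in `ω` steps so that
* the image of `F_Y` in `A` is a sum of such subgroups, hence has trivial dual;
* `F_Y ∩ K` is generated by a set `T ⊇ C` of fewer than `μ` equations whose variables lie in `Y`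
  (`ℤ` is noetherian, so finitely many equations suffice for each finite set of variables).
A weakly nontrivial solution of `T`, cut down to the variables of `T`, then kills `F_Y ∩ K` and so
induces a nonzero homomorphism from the image of `F_Y` to `ℤ`.
-/

open Cardinal Submodule Finsupp

namespace Cardinal

variable {μ : Cardinal.{u}}

theorem mk_finset_lt {α : Type u} (hℵ : ℵ₀ < μ) (h : #α < μ) : #(Finset α) < μ := by
  cases finite_or_infinite α
  · exact (lt_aleph0_of_finite _).trans hℵ
  · rwa [mk_finset_of_infinite]

theorem mk_setOf_finset_subset_lt {α : Type u} {Y : Set α} (hℵ : ℵ₀ < μ) (hY : #Y < μ) :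
    #{s : Finset α | ↑s ⊆ Y} < μ :=
  (mk_congr (Equiv.finsetSubtypeComm (· ∈ Y)).symm).trans_lt (mk_finset_lt hℵ hY)

theorem mk_iUnion_nat_lt_of_isRegular {α : Type u} (hμ : μ.IsRegular) (hℵ : ℵ₀ < μ)
    {s : ℕ → Set α} (h : ∀ n, #(s n) < μ) : #(⋃ n, s n) < μ := by
  simpa using mk_iUnion_le_sum_mk_lift.trans_lt
    (sum_lt_lift_of_isRegular.{0, u} hμ (by simpa using hℵ) h)

theorem exists_isRegular_between {l κ c : Cardinal.{u}} (hl : l.IsRegular) (hlκ : l ≤ κ)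
    (hc : c < κ) (hκ : ℵ₀ < κ) : ∃ μ, μ.IsRegular ∧ l ≤ μ ∧ μ ≤ κ ∧ c < μ ∧ ℵ₀ < μ := by
  have hsucc : max c ℵ₀ < Order.succ (max c ℵ₀) := Order.lt_succ _
  refine ⟨max l (Order.succ (max c ℵ₀)), ?_, le_max_left _ _,
    max_le hlκ (Order.succ_le_of_lt (max_lt hc hκ)), ?_, ?_⟩
  · rcases le_total l (Order.succ (max c ℵ₀)) with h | h
    · rw [max_eq_right h]; exact isRegular_succ (le_max_right _ _)
    · rwa [max_eq_left h]
  · exact (le_max_left _ _).trans_lt (hsucc.trans_le (le_max_right _ _))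
  · exact (le_max_right _ _).trans_lt (hsucc.trans_le (le_max_right _ _))

end Cardinal

theorem Set.exists_superset_mk_lt_forall_finset_subset {α : Type u} {μ : Cardinal.{u}}
    (hμ : μ.IsRegular) (hℵ : ℵ₀ < μ) (g : Finset α → Set α) (hg : ∀ s, #(g s) < μ)
    {Y₀ : Set α} (hY₀ : #Y₀ < μ) :
    ∃ Y, Y₀ ⊆ Y ∧ #Y < μ ∧ ∀ s : Finset α, ↑s ⊆ Y → g s ⊆ Y := by
  let step (Y : Set α) : Set α := Y ∪ ⋃ s ∈ {s : Finset α | ↑s ⊆ Y}, g s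
  let seq (n : ℕ) := step^[n] Y₀
  have hsucc (n : ℕ) : seq (n + 1) = step (seq n) := Function.iterate_succ_apply' _ _ _
  have hcard (n : ℕ) : #(seq n) < μ := by
    induction n with
    | zero => exact hY₀
    | succ n ih =>
      rw [hsucc]
      exact (mk_union_le _ _).trans_lt (add_lt_of_lt hμ.aleph0_le ih
        ((card_biUnion_lt_iff_forall_of_isRegular hμ (mk_setOf_finset_subset_lt hℵ ih)).2
          fun _ _ => hg _))
  have hmono : Monotone seq := monotone_nat_of_le_succ fun n => by
    rw [hsucc]; exact Set.subset_union_left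
  refine ⟨⋃ n, seq n, Set.subset_iUnion seq 0, mk_iUnion_nat_lt_of_isRegular hμ hℵ hcard,
    fun s hs => ?_⟩
  obtain ⟨n, hn⟩ := hmono.directed_le.exists_mem_subset_of_finset_subset_biUnion hs
  refine subset_trans ?_ (Set.subset_iUnion seq (n + 1))
  rw [hsucc]
  exact (Set.subset_biUnion_of_mem (u := g) hn).trans Set.subset_union_right

theorem AddMonoidHom.eq_zero_of_ker_le {G H B : Type*} [AddGroup G] [AddGroup H] [AddGroup B]
    (f : G →+ H) (hf : ∀ φ : f.range →+ B, φ = 0) {ψ : G →+ B} (hψ : f.ker ≤ ψ.ker) : ψ = 0 := by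
  have hψ' : f.rangeRestrict.ker ≤ ψ.ker := by rwa [f.ker_rangeRestrict]
  have h := liftOfRightInverse_comp f.rangeRestrict _
    (Function.rightInverse_surjInv f.rangeRestrict_surjective) ⟨ψ, hψ'⟩
  rw [hf (f.rangeRestrict.liftOfSurjective f.rangeRestrict_surjective ⟨ψ, hψ'⟩)] at h
  simpa using h.symm

theorem AddSubgroup.exists_finite_of_mem_sSup {A : Type*} [AddGroup A] {S : Set (AddSubgroup A)}
    {a : A} (ha : a ∈ sSup S) : ∃ t ⊆ S, t.Finite ∧ a ∈ sSup t := by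
  rw [sSup_eq_iSup', AddSubgroup.iSup_eq_closure] at ha
  induction ha using AddSubgroup.closure_induction with
  | mem x hx =>
    obtain ⟨⟨H, hH⟩, hx⟩ := Set.mem_iUnion.1 hx
    exact ⟨{H}, by simpa, Set.finite_singleton H, by simpa using hx⟩
  | zero => exact ⟨∅, Set.empty_subset _, Set.finite_empty, zero_mem _⟩
  | add x y _ _ hx hy =>
    obtain ⟨t, htS, htf, hxt⟩ := hx
    obtain ⟨t', ht'S, ht'f, hyt'⟩ := hy
    exact ⟨t ∪ t', Set.union_subset htS ht'S, htf.union ht'f,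
      add_mem (sSup_le_sSup (Set.subset_union_left (t := t')) hxt)
        (sSup_le_sSup (Set.subset_union_right (s := t)) hyt')⟩
  | neg x _ hx =>
    obtain ⟨t, htS, htf, hxt⟩ := hx
    exact ⟨t, htS, htf, neg_mem hxt⟩

theorem AddSubgroup.dual_sSup_eq_zero {A B : Type*} [AddGroup A] [AddGroup B]
    {S : Set (AddSubgroup A)} (hS : ∀ H ∈ S, ∀ φ : H →+ B, φ = 0) (φ : ↥(sSup S) →+ B) :
    φ = 0 := by
  have hle : sSup S ≤ φ.ker.map (sSup S).subtype := sSup_le fun H hH x hx => by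
    refine ⟨⟨x, le_sSup hH hx⟩, ?_, rfl⟩
    exact DFunLike.congr_fun (hS H hH (φ.comp (AddSubgroup.inclusion (le_sSup hH)))) ⟨x, hx⟩
  ext ⟨x, hx⟩
  obtain ⟨y, hy, rfl⟩ := hle hx
  simpa using hy

namespace LinearSystem

variable {J X : Type u} (k : J → X →₀ ℤ)

def IsWeaklyNontrivialSolution (T : Set J) (f : X → ℤ) : Prop :=
  (∀ j ∈ T, ((k j).sum fun x a => a * f x) = 0) ∧ ∃ x, (∃ j ∈ T, k j x ≠ 0) ∧ f x ≠ 0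

def varsOf (T : Set J) : Set X := ⋃ j ∈ T, ((k j).support : Set X)

def idleVars : Set X := {x | ∀ j, k j x = 0}

noncomputable def relations (T : Set J) : Submodule ℤ (X →₀ ℤ) :=
  span ℤ (k '' T ∪ (fun x => single x 1) '' idleVars k)

abbrev relationQuotient : Type u := (X →₀ ℤ) ⧸ relations k Set.univ

noncomputable def supportedRange (Y : Set X) : AddSubgroup (relationQuotient k) :=
  ((relations k Set.univ).mkQ ∘ₗ (supported ℤ ℤ Y).subtype).toAddMonoidHom.range

theorem mk_varsOf_lt {μ : Cardinal.{u}} (hμ : μ.IsRegular) (hℵ : ℵ₀ < μ) {T : Set J}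
    (hT : #T < μ) : #(varsOf k T) < μ :=
  (card_biUnion_lt_iff_forall_of_isRegular hμ hT).2 fun j _ =>
    (k j).support.finite_toSet.lt_aleph0.trans hℵ

theorem relations_mono : Monotone (relations k) := fun _ _ h =>
  span_mono (Set.union_subset_union_left _ (Set.image_mono h))

theorem exists_finite_of_mem_relations {v : X →₀ ℤ} (hv : v ∈ relations k Set.univ) :
    ∃ T : Set J, T.Finite ∧ v ∈ relations k T := by
  rw [relations, span_union, mem_sup] at hv
  obtain ⟨a, ha, b, hb, rfl⟩ := hv
  obtain ⟨l, -, rfl⟩ := (mem_span_image_iff_linearCombination ℤ).1 ha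
  refine ⟨l.support, l.support.finite_toSet, ?_⟩
  rw [relations, span_union]
  exact add_mem_sup
    ((mem_span_image_iff_linearCombination ℤ).2 ⟨l, mem_supported_support ℤ l, rfl⟩) hb

theorem exists_finite_supported_inf_le_relations {s : Set X} (hs : s.Finite) :
    ∃ T : Set J, T.Finite ∧ supported ℤ ℤ s ⊓ relations k Set.univ ≤ relations k T := by
  have : IsNoetherian ℤ (supported ℤ ℤ s) := isNoetherian_of_fg_of_noetherian _ <| by
    rw [supported_eq_span_single]; exact fg_span (hs.image _)
  obtain ⟨G, hGfin, hGspan⟩ := fg_def.1 (isNoetherian_submodule.1 this _ inf_le_left)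
  have hG : ∀ v ∈ G, ∃ T : Set J, T.Finite ∧ v ∈ relations k T := fun v hv =>
    exists_finite_of_mem_relations k (mem_inf.1 (hGspan ▸ subset_span hv)).2
  choose! T hTfin hT using hG
  refine ⟨⋃ v ∈ G, T v, hGfin.biUnion hTfin, ?_⟩
  rw [← hGspan, span_le]
  exact fun v hv => relations_mono k (Set.subset_biUnion_of_mem hv) (hT v hv)

theorem sum_mul_eq_linearCombination (f : X → ℤ) (v : X →₀ ℤ) :
    (v.sum fun x a => a * f x) = linearCombination ℤ f v := by
  simp [linearCombination_apply]

theorem dual_quotient_relations_eq_zero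
    (hS : ¬ ∃ f, IsWeaklyNontrivialSolution k Set.univ f)
    (φ : relationQuotient k →+ ℤ) : φ = 0 := by
  set ψ := φ.comp (relations k Set.univ).mkQ.toAddMonoidHom
  have hK : ∀ v ∈ relations k Set.univ, ψ v = 0 := fun v hv => by
    simp [ψ, (Submodule.Quotient.mk_eq_zero _).2 hv]
  set f : X → ℤ := fun x => ψ (single x 1)
  have hψ : ψ = (linearCombination ℤ f).toAddMonoidHom := addHom_ext fun x n => by
    rw [← smul_single_one, map_zsmul, map_zsmul]; simp [f]
  have hf : ∀ x, f x = 0 := fun x => by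
    by_cases hx : ∃ j, k j x ≠ 0
    · by_contra hfx
      refine hS ⟨f, fun j _ => ?_, x, by simpa using hx, hfx⟩
      rw [sum_mul_eq_linearCombination, ← LinearMap.toAddMonoidHom_coe, ← hψ]
      exact hK _ (subset_span (Or.inl ⟨j, trivial, rfl⟩))
    · exact hK _ (subset_span (Or.inr ⟨x, by simpa [idleVars] using hx, rfl⟩))
  have hψ0 : ψ = 0 := by
    rw [hψ]; ext x; simp [hf]
  ext a
  obtain ⟨v, rfl⟩ := mkQ_surjective _ a
  exact DFunLike.congr_fun hψ0 v

theorem exists_mk_lt_le_supportedRange {μ : Cardinal.{u}} (hμ : μ.IsRegular) (hℵ : ℵ₀ < μ)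
    {H : AddSubgroup (relationQuotient k)} (hH : #H < μ) :
    ∃ Z : Set X, #Z < μ ∧ ∀ Y, Z ⊆ Y → H ≤ supportedRange k Y := by
  choose r hr using mkQ_surjective (relations k Set.univ)
  refine ⟨⋃ a ∈ H, ((r a).support : Set X),
    (card_biUnion_lt_iff_forall_of_isRegular hμ hH).2 fun a _ =>
      (r a).support.finite_toSet.lt_aleph0.trans hℵ,
    fun Y hY a ha => ⟨⟨r a, hY.trans'
      (Set.subset_biUnion_of_mem (u := fun a => ((r a).support : Set X)) ha)⟩, hr a⟩⟩

theorem dual_supportedRange_eq_zero {Y : Set X}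
    (t : X → Set (AddSubgroup (relationQuotient k)))
    (hdual : ∀ x, ∀ H ∈ t x, ∀ φ : H →+ ℤ, φ = 0)
    (hmem : ∀ x, (relations k Set.univ).mkQ (single x 1) ∈ sSup (t x))
    (hle : ∀ x ∈ Y, ∀ H ∈ t x, H ≤ supportedRange k Y) :
    ∀ φ : supportedRange k Y →+ ℤ, φ = 0 := by
  have hspan : (supported ℤ ℤ Y).map (relations k Set.univ).mkQ ≤
      AddSubgroup.toIntSubmodule (sSup (⋃ x ∈ Y, t x)) := by
    rw [supported_eq_span_single, map_span, span_le]
    rintro _ ⟨_, ⟨x, hx, rfl⟩, rfl⟩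
    exact sSup_le_sSup (Set.subset_biUnion_of_mem (u := t) hx) (hmem x)
  have heq : supportedRange k Y = sSup (⋃ x ∈ Y, t x) := by
    refine le_antisymm ?_ (sSup_le fun H hH => ?_)
    · rintro _ ⟨⟨v, hv⟩, rfl⟩
      exact hspan (mem_map_of_mem hv)
    · obtain ⟨x, hx, hH⟩ := Set.mem_iUnion₂.1 hH
      exact hle x hx H hH
  rw [heq]
  refine AddSubgroup.dual_sSup_eq_zero fun H hH => ?_
  obtain ⟨x, -, hH⟩ := Set.mem_iUnion₂.1 hH
  exact hdual x H hH

theorem not_exists_isWeaklyNontrivialSolution {Y : Set X} {T : Set J}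
    (hdual : ∀ φ : supportedRange k Y →+ ℤ, φ = 0)
    (hrel : supported ℤ ℤ Y ⊓ relations k Set.univ ≤ relations k T)
    (hvars : varsOf k T ⊆ Y) :
    ¬ ∃ f, IsWeaklyNontrivialSolution k T f := by
  rintro ⟨f, hsol, x₀, ⟨j₀, hj₀, hx₀⟩, hfx₀⟩
  set f' := (varsOf k T).indicator f
  have hf' : ∀ j ∈ T, ∀ x ∈ (k j).support, f' x = f x := fun j hj x hx =>
    Set.indicator_of_mem (Set.mem_biUnion hj hx) f
  have hT : relations k T ≤ LinearMap.ker (linearCombination ℤ f') := span_le.2 <| by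
    rintro _ (⟨j, hj, rfl⟩ | ⟨x, hx, rfl⟩)
    · rw [SetLike.mem_coe, LinearMap.mem_ker, ← sum_mul_eq_linearCombination, ← hsol j hj]
      exact sum_congr fun x hx => by rw [hf' j hj x hx]
    · simp_all [f', varsOf, idleVars]
  let ψ := (linearCombination ℤ f' ∘ₗ (supported ℤ ℤ Y).subtype).toAddMonoidHom
  have hψ : ψ = 0 := AddMonoidHom.eq_zero_of_ker_le _ hdual fun v hv =>
    hT (hrel ⟨v.2, (Submodule.Quotient.mk_eq_zero _).1 hv⟩)
  have hx₀ : x₀ ∈ (k j₀).support := mem_support_iff.2 hx₀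
  have h := DFunLike.congr_fun hψ
    ⟨single x₀ 1, single_mem_supported ℤ 1 (hvars (Set.mem_biUnion hj₀ hx₀))⟩
  simp only [ψ, LinearMap.toAddMonoidHom_coe, LinearMap.coe_comp, Function.comp_apply,
    Submodule.coe_subtype, linearCombination_single, one_smul, AddMonoidHom.zero_apply] at h
  exact hfx₀ (hf' j₀ hj₀ x₀ hx₀ ▸ h)

theorem exists_superset_mk_lt_not_exists_isWeaklyNontrivialSolution {μ : Cardinal.{u}}
    (hμ : μ.IsRegular) (hℵ : ℵ₀ < μ)
    (hcover : ∀ a : relationQuotient k, ∃ t : Set (AddSubgroup _), t.Finite ∧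
      (∀ H ∈ t, #H < μ ∧ ∀ φ : H →+ ℤ, φ = 0) ∧ a ∈ sSup t)
    {C : Set J} (hC : #C < μ) :
    ∃ T : Set J, C ⊆ T ∧ #T < μ ∧ ¬ ∃ f, IsWeaklyNontrivialSolution k T f := by
  choose t htfin ht hmem using fun x : X => hcover ((relations k Set.univ).mkQ (single x 1))
  choose! Z hZμ hZ using fun (H : AddSubgroup (relationQuotient k)) (hH : #H < μ) =>
    exists_mk_lt_le_supportedRange k hμ hℵ hH
  choose R hRfin hR using fun s : Finset X =>
    exists_finite_supported_inf_le_relations k s.finite_toSet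
  have hfin {β : Type u} {s : Set β} (hs : s.Finite) : #s < μ := hs.lt_aleph0.trans hℵ
  -- with `x`, `Y` contains the variables needed to write the subgroups covering `x + K`; with a
  -- finite `s`, the variables of the equations `R s` that generate the relations supported on `s`
  obtain ⟨Y, hCY, hYμ, hY⟩ := Set.exists_superset_mk_lt_forall_finset_subset hμ hℵ
    (fun s => (⋃ x ∈ s, ⋃ H ∈ t x, Z H) ∪ varsOf k (R s))
    (fun s => (mk_union_le _ _).trans_lt (add_lt_of_lt hμ.aleph0_le
      ((card_biUnion_lt_iff_forall_of_isRegular hμ (hfin s.finite_toSet)).2 fun x _ =>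
        (card_biUnion_lt_iff_forall_of_isRegular hμ (hfin (htfin x))).2 fun H hH =>
          hZμ H (ht x H hH).1)
      (mk_varsOf_lt k hμ hℵ (hfin (hRfin s)))))
    (mk_varsOf_lt k hμ hℵ hC)
  refine ⟨C ∪ ⋃ s ∈ {s : Finset X | ↑s ⊆ Y}, R s, Set.subset_union_left, ?_,
    not_exists_isWeaklyNontrivialSolution k (Y := Y) ?_ ?_ ?_⟩
  · exact (mk_union_le _ _).trans_lt (add_lt_of_lt hμ.aleph0_le hC
      ((card_biUnion_lt_iff_forall_of_isRegular hμ (mk_setOf_finset_subset_lt hℵ hYμ)).2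
        fun s _ => hfin (hRfin s)))
  · refine dual_supportedRange_eq_zero k t (fun x H hH => (ht x H hH).2) hmem
      fun x hx H hH => hZ H (ht x H hH).1 Y fun y hy => hY {x} (by simpa using hx) ?_
    exact Or.inl (Set.mem_biUnion (Finset.mem_singleton_self x) (Set.mem_biUnion hH hy))
  · exact fun v hv => relations_mono k (Set.subset_union_of_subset_right
      (Set.subset_biUnion_of_mem (u := R) (show ↑v.support ⊆ Y from hv.1)) C)
      (hR v.support ⟨mem_supported_support ℤ v, hv.2⟩)
  · refine Set.iUnion₂_subset fun j hj => ?_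
    simp only [Set.mem_union, Set.mem_iUnion, Set.mem_ofPred_eq] at hj
    rcases hj with hj | ⟨s, hs, hj⟩
    · exact hCY.trans' (Set.subset_biUnion_of_mem (u := fun j => ((k j).support : Set X)) hj)
    · exact (hY s hs).trans' (Set.subset_union_right.trans'
        (Set.subset_biUnion_of_mem (u := fun j => ((k j).support : Set X)) hj))

end LinearSystem

theorem stmt18_general {κ : Cardinal.{u}} (hκ : Cardinal.aleph0 < κ)
    (h2 : ∃ l : Cardinal.{u}, l ≤ κ ∧ l.IsRegular ∧
      ∀ (A : Type u) [AddCommGroup A], (∀ φ : A →+ ℤ, φ = 0) →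
        (⨆ H ∈ {H : AddSubgroup A |
          Cardinal.mk H < l ∧ ∀ φ : H →+ ℤ, φ = 0}, H) = ⊤)
    {J X : Type u} (k : J → (X →₀ ℤ))
    (hS : ¬ ∃ f : X → ℤ, (∀ j, ((k j).sum fun x a => a * f x) = 0) ∧
        ∃ x, (∃ j, k j x ≠ 0) ∧ f x ≠ 0)
    (C : Set J) (hC : Cardinal.mk C < κ) :
    ∃ T : Set J, C ⊆ T ∧ Cardinal.mk T < κ ∧
      ¬ ∃ f : X → ℤ, (∀ j ∈ T, ((k j).sum fun x a => a * f x) = 0) ∧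
          ∃ x, (∃ j ∈ T, k j x ≠ 0) ∧ f x ≠ 0 := by
  obtain ⟨l, hlκ, hl, hcover⟩ := h2
  obtain ⟨μ, hμ, hlμ, hμκ, hCμ, hℵμ⟩ := exists_isRegular_between hl hlκ hC hκ
  have htop := hcover _ (LinearSystem.dual_quotient_relations_eq_zero k
    (by simpa [LinearSystem.IsWeaklyNontrivialSolution] using hS))
  rw [← sSup_eq_iSup] at htop
  obtain ⟨T, hCT, hTμ, hT⟩ :=
    LinearSystem.exists_superset_mk_lt_not_exists_isWeaklyNontrivialSolution k hμ hℵμ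
      (fun a => by
        obtain ⟨t, htS, htfin, ha⟩ :=
          AddSubgroup.exists_finite_of_mem_sSup (htop ▸ AddSubgroup.mem_top a)
        exact ⟨t, htfin, fun H hH => ⟨(htS hH).1.trans_le hlμ, (htS hH).2⟩, ha⟩) hCμ
  exact ⟨T, hCT, hTμ.trans_le hμκ, hT⟩

/-- Implication (2) ⇒ (3) of Proposition 3.1: let `κ` be uncountable and suppose
there is a regular `l ≤ κ` such that every abelian group with trivial dual is the
sum of its subgroups of cardinality `< l` having trivial dual. Then for every
nonempty system `S` of homogeneous `ℤ`-linear equations with no weakly nontrivial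
solution in `ℤ` and every `C ⊆ S` with `|C| < κ`, there is `T` with `C ⊆ T ⊆ S`,
`|T| < κ`, having no weakly nontrivial solution in `ℤ`. -/
theorem stmt18 {κ : Cardinal.{u}} (hκ : Cardinal.aleph0 < κ)
    (h2 : ∃ l : Cardinal.{u}, l ≤ κ ∧ l.IsRegular ∧
      ∀ (A : Type u) [AddCommGroup A], (∀ φ : A →+ ℤ, φ = 0) →
        (⨆ H ∈ {H : AddSubgroup A |
          Cardinal.mk H < l ∧ ∀ φ : H →+ ℤ, φ = 0}, H) = ⊤)
    {J X : Type u} (k : J → (X →₀ ℤ)) (hJ : Nonempty J)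
    (hS : ¬ ∃ f : X → ℤ, (∀ j, ((k j).sum fun x a => a * f x) = 0) ∧
        ∃ x, (∃ j, k j x ≠ 0) ∧ f x ≠ 0)
    (C : Set J) (hC : Cardinal.mk C < κ) :
    ∃ T : Set J, C ⊆ T ∧ Cardinal.mk T < κ ∧
      ¬ ∃ f : X → ℤ, (∀ j ∈ T, ((k j).sum fun x a => a * f x) = 0) ∧
          ∃ x, (∃ j ∈ T, k j x ≠ 0) ∧ f x ≠ 0 :=
  stmt18_general hκ h2 k hS C hC
end
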